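/- arXiv:2308.09056 — 6 statements merged into one kernel-verified Lean document; each statement's English description precedes it below -/
import Mathlib

section
/- Let G be a subgroup of S_n with ℓ = [S_n : G], and let θ = (θ_1,…,θ_ℓ) be a set of secondary invariants for ℚ[x_1,…,x_n]^G with each θ_j ∈ ℤ[x_1,…,x_n]^G. Then a prime p divides ℧(θ) (the content of det M(θ)) if and only if p is bad for θ, i.e. if and only if 𝔽_p[x_1,…,x_n]^G is NOT equal to the internal direct sum ⊕_{j=1}^ℓ 𝔽_p[x_1,…,x_n]^{S_n}·θ̄_j. -/
open MvPolynomial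

/-- A polynomial is invariant under the subgroup `G` of the symmetric group acting
by permuting the variables. -/
def PermInvariant {n : ℕ} (G : Subgroup (Equiv.Perm (Fin n))) {R : Type*} [CommSemiring R]
    (f : MvPolynomial (Fin n) R) : Prop :=
  ∀ g ∈ G, rename (⇑g) f = f

/-- `θ = (θ_1, …, θ_ℓ)` is a set of secondary invariants for `ℚ[x_1,…,x_n]^G` lying in
`ℤ[x_1,…,x_n]^G`: the `θ_j` are homogeneous `G`-invariant integer polynomials and
`ℚ[x]^G = ⊕_{j=1}^ℓ ℚ[x]^{S_n}·θ_j` (every `G`-invariant rational polynomial has a unique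
expression `Σ_j c_j θ_j` with symmetric coefficients `c_j`). -/
def IsSecondaries {n : ℕ} (G : Subgroup (Equiv.Perm (Fin n))) (ℓ : ℕ)
    (θ : Fin ℓ → MvPolynomial (Fin n) ℤ) : Prop :=
  (∀ j, ∃ d, (θ j).IsHomogeneous d) ∧ (∀ j, PermInvariant G (θ j)) ∧
  ∀ f : MvPolynomial (Fin n) ℚ, PermInvariant G f →
    ∃! c : Fin ℓ → MvPolynomial (Fin n) ℚ,
      (∀ j, (c j).IsSymmetric) ∧ f = ∑ j, c j * map (Int.castRingHom ℚ) (θ j)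

/-- `γ_1, …, γ_ℓ` is a system of representatives of the left cosets of `G` in `S_n`. -/
def IsCosetReps {n : ℕ} (G : Subgroup (Equiv.Perm (Fin n))) (ℓ : ℕ)
    (γ : Fin ℓ → Equiv.Perm (Fin n)) : Prop :=
  ∀ σ : Equiv.Perm (Fin n), ∃! i : Fin ℓ, (γ i)⁻¹ * σ ∈ G

/-- The `ℓ×ℓ` matrix `M(θ)` with `(i,j)` entry `γ_i · θ_j`. -/
noncomputable def secMatrix {n ℓ : ℕ} {R : Type*} [CommSemiring R]
    (γ : Fin ℓ → Equiv.Perm (Fin n)) (θ : Fin ℓ → MvPolynomial (Fin n) R) :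
    Matrix (Fin ℓ) (Fin ℓ) (MvPolynomial (Fin n) R) :=
  Matrix.of fun i j => rename (⇑(γ i)) (θ j)

/-- The content of an integer multivariate polynomial: the gcd of its coefficients. -/
noncomputable def mvContent {n : ℕ} (f : MvPolynomial (Fin n) ℤ) : ℤ :=
  f.support.gcd f.coeff

/-- The prime `p` is *good* for `θ`: `𝔽_p[x]^G = ⊕_{j=1}^ℓ 𝔽_p[x]^{S_n}·θ̄_j`, where
`θ̄_j` is the reduction of `θ_j` mod `p`. -/
def IsGoodPrime {n : ℕ} (G : Subgroup (Equiv.Perm (Fin n))) (ℓ : ℕ)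
    (θ : Fin ℓ → MvPolynomial (Fin n) ℤ) (p : ℕ) : Prop :=
  ∀ f : MvPolynomial (Fin n) (ZMod p), PermInvariant G f →
    ∃! c : Fin ℓ → MvPolynomial (Fin n) (ZMod p),
      (∀ j, (c j).IsSymmetric) ∧ f = ∑ j, c j * map (Int.castRingHom (ZMod p)) (θ j)

/-!
Modulo `p`, the content condition says that `det M(θ̄) = 0` in `𝔽_p[x]`. The rows of `M(θ̄)` are
permuted by every `τ ∈ S_n`, so its kernel is `S_n`-stable; a kernel vector of minimal support has
`S_n`-invariant coordinate ratios, and clearing the denominators of these ratios by the orbit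
product of one coordinate gives a nonzero symmetric kernel vector `c`, that is, a relation
`∑ c_j θ̄_j = 0` which contradicts uniqueness. Conversely, if `det M(θ̄) ≠ 0` then uniqueness is
immediate, and for existence a `G`-invariant `f` lifts to an integral `F`, whose rational
coefficients `c_j` satisfy `det M(θ) · c_j ∈ ℤ[x]` by Cramer's rule; since `det M(θ)` is nonzero
mod `p`, Gauss's lemma shows that the `c_j` have denominators prime to `p`, so they reduce mod `p`.
-/

open Matrix

section Rename

variable {σ R : Type*} [CommSemiring R]

theorem rename_perm_mul (a b : Equiv.Perm σ) (f : MvPolynomial σ R) :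
    rename ⇑(a * b) f = rename a (rename b f) := by
  rw [rename_rename]
  rfl

theorem rename_perm_eq_self_iff (g : Equiv.Perm σ) (f : MvPolynomial σ R) :
    rename g f = f ↔ ∀ m, f.coeff (m.mapDomain g) = f.coeff m := by
  constructor
  · intro h m
    rw [← coeff_rename_mapDomain g g.injective f m, h]
  · intro h
    ext m'
    obtain ⟨m, rfl⟩ := Finsupp.mapDomain_surjective g.surjective m'
    rw [coeff_rename_mapDomain g g.injective, h]

end Rename

theorem PermInvariant.map {n : ℕ} {G : Subgroup (Equiv.Perm (Fin n))} {R S : Type*}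
    [CommSemiring R] [CommSemiring S] (φ : R →+* S) {f : MvPolynomial (Fin n) R}
    (hf : PermInvariant G f) : PermInvariant G (map φ f) := by
  intro g hg
  rw [← map_rename, hf g hg]

theorem exists_permInvariant_map_eq {n p : ℕ} [NeZero p] {G : Subgroup (Equiv.Perm (Fin n))}
    {f : MvPolynomial (Fin n) (ZMod p)} (hf : PermInvariant G f) :
    ∃ F : MvPolynomial (Fin n) ℤ, PermInvariant G F ∧ map (Int.castRingHom (ZMod p)) F = f := by
  refine ⟨AddMonoidAlgebra.ofCoeff
    (Finsupp.mapRange (fun a : ZMod p => (a.val : ℤ)) (by simp) (AddMonoidAlgebra.coeff f)), ?_, ?_⟩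
  · intro g hg
    rw [rename_perm_eq_self_iff]
    intro m
    exact congrArg (fun a : ZMod p => (a.val : ℤ)) ((rename_perm_eq_self_iff g f).1 (hf g hg) m)
  · rw [map_mapRange_eq_iff]
    intro d
    simp

theorem intCast_dvd_mvContent_iff {n p : ℕ} (f : MvPolynomial (Fin n) ℤ) :
    (p : ℤ) ∣ mvContent f ↔ map (Int.castRingHom (ZMod p)) f = 0 := by
  rw [← C_dvd_iff_map_hom_eq_zero (Int.castRingHom (ZMod p)) _
    (fun r => ZMod.intCast_zmod_eq_zero_iff_dvd r p),
    C_dvd_iff_dvd_coeff, mvContent, Finset.dvd_gcd_iff]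
  refine ⟨fun h m => ?_, fun h m _ => h m⟩
  by_cases hm : m ∈ f.support
  · exact h m hm
  · simp [notMem_support_iff.1 hm]

section Denominators

variable {σ : Type*}

theorem exists_zsmul_eq_map (c : MvPolynomial σ ℚ) :
    ∃ k : ℤ, k ≠ 0 ∧ ∃ d, k • c = map (Int.castRingHom ℚ) d := by
  induction c using MvPolynomial.induction_on' with
  | monomial u a =>
    refine ⟨a.den, by exact_mod_cast a.den_nz, monomial u a.num, ?_⟩
    rw [map_monomial, smul_monomial, ← Int.cast_smul_eq_zsmul ℚ, smul_eq_mul, Int.cast_natCast,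
      Rat.den_mul_eq_num]
    rfl
  | add c₁ c₂ h₁ h₂ =>
    obtain ⟨k₁, hk₁, d₁, hd₁⟩ := h₁
    obtain ⟨k₂, hk₂, d₂, hd₂⟩ := h₂
    refine ⟨k₁ * k₂, mul_ne_zero hk₁ hk₂, k₂ • d₁ + k₁ • d₂, ?_⟩
    rw [map_add, map_zsmul, map_zsmul, ← hd₁, ← hd₂, smul_add, smul_smul, smul_smul, mul_comm k₂]

theorem exists_zsmul_eq_map_pi {ι : Type*} [Fintype ι] (c : ι → MvPolynomial σ ℚ) :
    ∃ k : ℤ, k ≠ 0 ∧ ∃ d : ι → MvPolynomial σ ℤ, ∀ j, k • c j = map (Int.castRingHom ℚ) (d j) := by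
  classical
  choose k hk d hd using fun j => exists_zsmul_eq_map (c j)
  refine ⟨∏ j, k j, Finset.prod_ne_zero_iff.2 fun j _ => hk j,
    fun j => (∏ i ∈ Finset.univ.erase j, k i) • d j, fun j => ?_⟩
  rw [← Finset.prod_erase_mul _ _ (Finset.mem_univ j), mul_smul, hd j, map_zsmul]

/-- Gauss's lemma: if `p` divides the denominator, then `ē * d̄ = 0` in the domain `𝔽_p[x]`. -/
theorem exists_zsmul_eq_map_of_mul_zsmul_eq_map {p : ℕ} (hp : p.Prime) {e : MvPolynomial σ ℤ}
    (he : map (Int.castRingHom (ZMod p)) e ≠ 0) {c : MvPolynomial σ ℚ} {D : MvPolynomial σ ℤ}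
    (hD : map (Int.castRingHom ℚ) e * c = map (Int.castRingHom ℚ) D) {t : ℤ}
    {d : MvPolynomial σ ℤ} (hd : ((p : ℤ) * t) • c = map (Int.castRingHom ℚ) d) :
    ∃ d', t • c = map (Int.castRingHom ℚ) d' := by
  have : Fact p.Prime := ⟨hp⟩
  have hed : e * d = ((p : ℤ) * t) • D :=
    map_injective (Int.castRingHom ℚ) Int.cast_injective <| by
      rw [map_mul, ← hd, mul_smul_comm, hD, map_zsmul]
  have hdvd : C (p : ℤ) ∣ d := by
    rw [C_dvd_iff_map_hom_eq_zero (Int.castRingHom (ZMod p)) _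
      (fun r => ZMod.intCast_zmod_eq_zero_iff_dvd r p)]
    have hred := congrArg (map (Int.castRingHom (ZMod p))) hed
    rw [map_mul, map_zsmul, ← Int.cast_smul_eq_zsmul (ZMod p), Int.cast_mul, Int.cast_natCast,
      ZMod.natCast_self, zero_mul, zero_smul] at hred
    exact (mul_eq_zero.1 hred).resolve_left he
  obtain ⟨d', rfl⟩ := hdvd
  refine ⟨d', smul_right_injective _ (by exact_mod_cast hp.ne_zero : (p : ℤ) ≠ 0) ?_⟩
  change (p : ℤ) • t • c = (p : ℤ) • _
  rw [smul_smul, hd, ← smul_eq_C_mul, map_zsmul]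

theorem exists_zsmul_eq_map_of_not_dvd {ι : Type*} [Fintype ι] {p : ℕ} (hp : p.Prime)
    {e : MvPolynomial σ ℤ} (he : map (Int.castRingHom (ZMod p)) e ≠ 0)
    {c : ι → MvPolynomial σ ℚ} (D : ι → MvPolynomial σ ℤ)
    (hD : ∀ j, map (Int.castRingHom ℚ) e * c j = map (Int.castRingHom ℚ) (D j)) :
    ∃ k : ℤ, ¬ (p : ℤ) ∣ k ∧
      ∃ d : ι → MvPolynomial σ ℤ, ∀ j, k • c j = map (Int.castRingHom ℚ) (d j) := by
  obtain ⟨k, hk, d, hd⟩ := exists_zsmul_eq_map_pi c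
  induction hN : k.natAbs using Nat.strong_induction_on generalizing k d with
  | _ N ih =>
    by_cases hpk : (p : ℤ) ∣ k
    · obtain ⟨t, rfl⟩ := hpk
      have ht : t ≠ 0 := right_ne_zero_of_mul hk
      choose d' hd' using fun j => exists_zsmul_eq_map_of_mul_zsmul_eq_map hp he (hD j) (hd j)
      refine ih t.natAbs ?_ t ht d' hd' rfl
      rw [← hN, Int.natAbs_mul, Int.natAbs_natCast]
      exact lt_mul_left (Int.natAbs_pos.2 ht) hp.one_lt
    · exact ⟨k, hpk, d, hd⟩

end Denominators

theorem Matrix.exists_map_det_mul_eq_map {ι R S : Type*} [Fintype ι] [DecidableEq ι]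
    [CommRing R] [CommRing S] (φ : R →+* S) (A : Matrix ι ι R) (b : ι → R) {x : ι → S}
    (hx : φ.mapMatrix A *ᵥ x = φ ∘ b) : ∃ D : ι → R, ∀ j, φ A.det * x j = φ (D j) := by
  refine ⟨A.adjugate *ᵥ b, fun j => ?_⟩
  have h := congrArg (fun v => (φ.mapMatrix A).adjugate *ᵥ v) hx
  simp only [mulVec_mulVec, adjugate_mul, smul_mulVec, one_mulVec] at h
  rw [RingHom.map_det, ← smul_eq_mul, ← Pi.smul_apply, h, RingHom.map_mulVec,
    ← RingHom.map_adjugate]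
  rfl

section SecMatrix

variable {n ℓ : ℕ} {R : Type*}

theorem secMatrix_map [CommSemiring R] {S : Type*} [CommSemiring S] (φ : R →+* S)
    (γ : Fin ℓ → Equiv.Perm (Fin n)) (θ : Fin ℓ → MvPolynomial (Fin n) R) :
    secMatrix γ (fun j => map φ (θ j)) = (map φ).mapMatrix (secMatrix γ θ) := by
  ext i j
  simp [secMatrix, map_rename]

theorem det_secMatrix_map [CommRing R] {S : Type*} [CommRing S] (φ : R →+* S)
    (γ : Fin ℓ → Equiv.Perm (Fin n)) (θ : Fin ℓ → MvPolynomial (Fin n) R) :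
    (secMatrix γ (fun j => map φ (θ j))).det = map φ (secMatrix γ θ).det := by
  rw [secMatrix_map, RingHom.map_det]

theorem secMatrix_mulVec_of_isSymmetric [CommSemiring R] (γ : Fin ℓ → Equiv.Perm (Fin n))
    (θ : Fin ℓ → MvPolynomial (Fin n) R) {c : Fin ℓ → MvPolynomial (Fin n) R}
    (hc : ∀ j, (c j).IsSymmetric) :
    secMatrix γ θ *ᵥ c = fun i => rename (γ i) (∑ j, c j * θ j) := by
  funext i
  simp only [Matrix.mulVec, dotProduct, secMatrix, Matrix.of_apply, map_sum, map_mul, hc _ _,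
    mul_comm]

/-- `τ` maps the row of `γ i` to the row of the coset representative of `τ⁻¹ γ i`. -/
theorem secMatrix_mulVec_rename [CommSemiring R] {G : Subgroup (Equiv.Perm (Fin n))}
    {γ : Fin ℓ → Equiv.Perm (Fin n)} (hγ : IsCosetReps G ℓ γ)
    {θ : Fin ℓ → MvPolynomial (Fin n) R} (hθ : ∀ j, PermInvariant G (θ j))
    {v : Fin ℓ → MvPolynomial (Fin n) R} (hv : secMatrix γ θ *ᵥ v = 0)
    (τ : Equiv.Perm (Fin n)) :
    secMatrix γ θ *ᵥ (fun j => rename τ (v j)) = 0 := by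
  funext i
  obtain ⟨i', hi', -⟩ := hγ (τ⁻¹ * γ i)
  have hrow : ∀ j, rename (γ i) (θ j) = rename τ (rename (γ i') (θ j)) := by
    intro j
    have hγi : γ i = τ * (γ i' * ((γ i')⁻¹ * (τ⁻¹ * γ i))) := by group
    rw [hγi, rename_perm_mul, rename_perm_mul, hθ j _ hi']
  have hv' := congrFun hv i'
  simp only [Matrix.mulVec, dotProduct, secMatrix, Matrix.of_apply, Pi.zero_apply] at hv' ⊢
  simp only [hrow, ← map_mul, ← map_sum, hv', map_zero]

end SecMatrix

theorem Submodule.exists_ne_zero_forall_smul_eq {A ι : Type*} [CommRing A] [Fintype ι]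
    {N : Submodule A (ι → A)} (hN : N ≠ ⊥) :
    ∃ v ∈ N, v ≠ 0 ∧ ∀ w ∈ N, (∀ j, v j = 0 → w j = 0) → ∀ j, w j • v = v j • w := by
  classical
  let supp : (ι → A) → Finset ι := fun v => Finset.univ.filter (v · ≠ 0)
  obtain ⟨v, ⟨hvN, hv0⟩, hmin⟩ :=
    (measure fun v => (supp v).card).wf.has_min {v | v ∈ N ∧ v ≠ 0} ((N.ne_bot_iff).1 hN)
  refine ⟨v, hvN, hv0, fun w hwN hsupp j => ?_⟩
  by_cases hvj : v j = 0
  · rw [hvj, hsupp j hvj, zero_smul, zero_smul]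
  by_contra hne
  refine hmin (w j • v - v j • w) ⟨N.sub_mem (N.smul_mem _ hvN) (N.smul_mem _ hwN),
    sub_ne_zero.2 hne⟩ (Finset.card_lt_card ?_)
  have hsub : supp (w j • v - v j • w) ⊆ supp v := by
    intro i
    simp only [supp, Finset.mem_filter, Finset.mem_univ, true_and]
    intro hi hvi
    simp [hvi, hsupp i hvi] at hi
  refine (Finset.ssubset_iff_of_subset hsub).2 ⟨j, by simpa [supp] using hvj, ?_⟩
  simp [supp, mul_comm]

/-- `h` says that `a / μ` is a symmetric rational function; `∏_{τ ≠ 1} τ μ` clears its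
denominator. -/
theorem isSymmetric_mul_prod_rename {σ R : Type*} [Fintype σ] [DecidableEq σ] [CommRing R]
    [IsDomain R] {μ a : MvPolynomial σ R} (hμ : μ ≠ 0)
    (h : ∀ ρ : Equiv.Perm σ, rename ρ μ * a = μ * rename ρ a) :
    (a * ∏ τ ∈ Finset.univ.erase (1 : Equiv.Perm σ), rename τ μ).IsSymmetric := by
  set s := ∏ τ ∈ Finset.univ.erase (1 : Equiv.Perm σ), rename τ μ
  set Q := ∏ τ : Equiv.Perm σ, rename τ μ
  have hQ : Q.IsSymmetric := by
    intro ρ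
    rw [map_prod]
    exact Fintype.prod_equiv (Equiv.mulLeft ρ) _ _ fun τ => (rename_perm_mul ρ τ μ).symm
  have hμs : μ * s = Q := by
    have := Finset.mul_prod_erase Finset.univ (fun τ : Equiv.Perm σ => rename τ μ)
      (Finset.mem_univ 1)
    rwa [Equiv.Perm.coe_one, rename_id_apply] at this
  intro ρ
  have hρμ : rename ρ μ ≠ 0 := by
    rwa [Ne, map_eq_zero_iff _ (rename_injective _ ρ.injective)]
  refine mul_left_cancel₀ hμ (mul_left_cancel₀ hρμ ?_)
  calc rename ρ μ * (μ * rename ρ (a * s))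
      = μ * rename ρ a * Q := by
        rw [mul_left_comm, ← map_mul, mul_left_comm, hμs, map_mul, hQ ρ, mul_assoc]
    _ = rename ρ μ * a * Q := by rw [h ρ]
    _ = rename ρ μ * (μ * (a * s)) := by rw [← hμs]; ring

section Primes

variable {n ℓ : ℕ} {G : Subgroup (Equiv.Perm (Fin n))} {γ : Fin ℓ → Equiv.Perm (Fin n)}

theorem exists_isSymmetric_secMatrix_mulVec_eq_zero {K : Type*} [CommRing K] [IsDomain K]
    (hγ : IsCosetReps G ℓ γ) {θ : Fin ℓ → MvPolynomial (Fin n) K}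
    (hθ : ∀ j, PermInvariant G (θ j)) (hdet : (secMatrix γ θ).det = 0) :
    ∃ c ≠ 0, (∀ j, (c j).IsSymmetric) ∧ secMatrix γ θ *ᵥ c = 0 := by
  have hN : LinearMap.ker (secMatrix γ θ).mulVecLin ≠ ⊥ := by
    obtain ⟨v, hv0, hv⟩ := Matrix.exists_mulVec_eq_zero_iff.2 hdet
    exact (Submodule.ne_bot_iff _).2 ⟨v, hv, hv0⟩
  obtain ⟨v, hv : _ *ᵥ v = 0, hv0, hmin⟩ := Submodule.exists_ne_zero_forall_smul_eq hN
  obtain ⟨j₀, hj₀⟩ := Function.ne_iff.1 hv0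
  have hratio : ∀ j (ρ : Equiv.Perm (Fin n)),
      rename ρ (v j₀) * v j = v j₀ * rename ρ (v j) := fun j ρ => by
    have := hmin (fun j => rename ρ (v j)) (secMatrix_mulVec_rename hγ hθ hv ρ)
      (fun j h => by rw [h, map_zero]) j₀
    simpa using congrFun this j
  set s := ∏ τ ∈ Finset.univ.erase (1 : Equiv.Perm (Fin n)), rename τ (v j₀)
  have hs : s ≠ 0 := Finset.prod_ne_zero_iff.2 fun τ _ => by
    rwa [Ne, map_eq_zero_iff _ (rename_injective _ τ.injective)]
  refine ⟨fun j => v j * s, Function.ne_iff.2 ⟨j₀, mul_ne_zero hj₀ hs⟩,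
    fun j => isSymmetric_mul_prod_rename hj₀ (hratio j), ?_⟩
  have hsv : (fun j => v j * s) = s • v := funext fun j => mul_comm _ _
  rw [hsv, Matrix.mulVec_smul, hv, smul_zero]

theorem not_isGoodPrime_of_det_eq_zero {p : ℕ} (hp : p.Prime) (hγ : IsCosetReps G ℓ γ)
    {θ : Fin ℓ → MvPolynomial (Fin n) ℤ} (hθ : ∀ j, PermInvariant G (θ j))
    (hdet : (secMatrix γ (fun j => map (Int.castRingHom (ZMod p)) (θ j))).det = 0) :
    ¬ IsGoodPrime G ℓ θ p := by
  have : Fact p.Prime := ⟨hp⟩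
  intro hgood
  obtain ⟨c, hc0, hcsym, hc⟩ :=
    exists_isSymmetric_secMatrix_mulVec_eq_zero hγ (fun j => (hθ j).map _) hdet
  obtain ⟨j, -⟩ := Function.ne_iff.1 hc0
  have hrel : ∑ j, c j * map (Int.castRingHom (ZMod p)) (θ j) = 0 := by
    have := congrFun hc j
    rw [secMatrix_mulVec_of_isSymmetric _ _ hcsym] at this
    exact (map_eq_zero_iff _ (rename_injective _ (γ j).injective)).1 this
  exact hc0 ((hgood 0 fun g _ => map_zero _).unique ⟨hcsym, hrel.symm⟩
    ⟨fun _ _ => map_zero _, by simp⟩)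

theorem eq_of_sum_mul_eq_of_det_ne_zero {K : Type*} [CommRing K] [IsDomain K]
    {θ : Fin ℓ → MvPolynomial (Fin n) K} (hdet : (secMatrix γ θ).det ≠ 0)
    {c c' : Fin ℓ → MvPolynomial (Fin n) K} (hc : ∀ j, (c j).IsSymmetric)
    (hc' : ∀ j, (c' j).IsSymmetric) (h : ∑ j, c j * θ j = ∑ j, c' j * θ j) : c = c' := by
  have hker : secMatrix γ θ *ᵥ (c - c') = 0 := by
    change secMatrix γ θ *ᵥ (fun j => c j - c' j) = 0
    rw [secMatrix_mulVec_of_isSymmetric _ _ fun j => (hc j).sub (hc' j)]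
    simp only [sub_mul, Finset.sum_sub_distrib, h, sub_self, map_zero]
    rfl
  by_contra hne
  exact hdet (Matrix.exists_mulVec_eq_zero_iff.1 ⟨c - c', sub_ne_zero.2 hne, hker⟩)

theorem exists_zsmul_eq_sum_of_not_dvd {p : ℕ} (hp : p.Prime)
    {θ : Fin ℓ → MvPolynomial (Fin n) ℤ} (hθ : IsSecondaries G ℓ θ)
    (hdet : map (Int.castRingHom (ZMod p)) (secMatrix γ θ).det ≠ 0)
    {F : MvPolynomial (Fin n) ℤ} (hF : PermInvariant G F) :
    ∃ k : ℤ, ¬ (p : ℤ) ∣ k ∧ ∃ d : Fin ℓ → MvPolynomial (Fin n) ℤ,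
      (∀ j, (d j).IsSymmetric) ∧ k • F = ∑ j, d j * θ j := by
  obtain ⟨c, ⟨hcsym, hFc⟩, -⟩ := hθ.2.2 _ (hF.map _)
  obtain ⟨D, hD⟩ := Matrix.exists_map_det_mul_eq_map (map (Int.castRingHom ℚ)) (secMatrix γ θ)
    (fun i => rename (γ i) F) (x := c) <| by
      rw [← secMatrix_map, secMatrix_mulVec_of_isSymmetric _ _ hcsym, ← hFc]
      funext i
      exact (map_rename _ _ _).symm
  obtain ⟨k, hpk, d, hd⟩ := exists_zsmul_eq_map_of_not_dvd hp hdet D hD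
  have hinj : Function.Injective (map (Int.castRingHom ℚ) : MvPolynomial (Fin n) ℤ → _) :=
    map_injective _ Int.cast_injective
  refine ⟨k, hpk, d, fun j ρ => hinj ?_, hinj ?_⟩
  · rw [map_rename, ← hd j, map_zsmul, hcsym j ρ]
  · simp only [map_zsmul, map_sum, map_mul, hFc, Finset.smul_sum, ← hd, smul_mul_assoc]

theorem isGoodPrime_of_det_ne_zero {p : ℕ} (hp : p.Prime) {θ : Fin ℓ → MvPolynomial (Fin n) ℤ}
    (hθ : IsSecondaries G ℓ θ)
    (hdet : (secMatrix γ (fun j => map (Int.castRingHom (ZMod p)) (θ j))).det ≠ 0) :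
    IsGoodPrime G ℓ θ p := by
  have : Fact p.Prime := ⟨hp⟩
  intro f hf
  obtain ⟨F, hFG, rfl⟩ := exists_permInvariant_map_eq hf
  obtain ⟨k, hpk, d, hdsym, hkF⟩ :=
    exists_zsmul_eq_sum_of_not_dvd hp hθ (by rwa [← det_secMatrix_map]) hFG
  have hk : (k : ZMod p) ≠ 0 := by rwa [Ne, ZMod.intCast_zmod_eq_zero_iff_dvd]
  set π := map (Int.castRingHom (ZMod p)) (σ := Fin n)
  have hπsym : ∀ j, ((k : ZMod p)⁻¹ • π (d j)).IsSymmetric := fun j => ((hdsym j).map _).smul _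
  have hsum : π F = ∑ j, ((k : ZMod p)⁻¹ • π (d j)) * π (θ j) := by
    rw [← inv_smul_smul₀ hk (π F), Int.cast_smul_eq_zsmul, ← map_zsmul, hkF, map_sum,
      Finset.smul_sum]
    simp only [map_mul, smul_mul_assoc]
  exact ⟨_, ⟨hπsym, hsum⟩, fun c' ⟨hc'sym, hc'⟩ =>
    eq_of_sum_mul_eq_of_det_ne_zero hdet hc'sym hπsym (hc'.symm.trans hsum)⟩

end Primes

theorem stmt0_general {n : ℕ} (G : Subgroup (Equiv.Perm (Fin n))) (ℓ : ℕ)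
    (θ : Fin ℓ → MvPolynomial (Fin n) ℤ) (hθ : IsSecondaries G ℓ θ)
    (γ : Fin ℓ → Equiv.Perm (Fin n)) (hγ : IsCosetReps G ℓ γ)
    (p : ℕ) (hp : p.Prime) :
    (p : ℤ) ∣ mvContent (secMatrix γ θ).det ↔ ¬ IsGoodPrime G ℓ θ p := by
  rw [intCast_dvd_mvContent_iff, ← det_secMatrix_map]
  exact ⟨not_isGoodPrime_of_det_eq_zero hp hγ hθ.2.1,
    not_imp_comm.1 (isGoodPrime_of_det_ne_zero hp hθ)⟩

/-- A prime `p` divides `℧(θ)` (the content of `det M(θ)`) if and only if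
`p` is bad for `θ`. -/
theorem stmt0 {n : ℕ} (G : Subgroup (Equiv.Perm (Fin n))) (ℓ : ℕ) (hℓ : ℓ = G.index)
    (θ : Fin ℓ → MvPolynomial (Fin n) ℤ) (hθ : IsSecondaries G ℓ θ)
    (γ : Fin ℓ → Equiv.Perm (Fin n)) (hγ : IsCosetReps G ℓ γ)
    (p : ℕ) (hp : p.Prime) :
    (p : ℤ) ∣ mvContent (secMatrix γ θ).det ↔ ¬ IsGoodPrime G ℓ θ p :=
  stmt0_general G ℓ θ hθ γ hγ p hp
end

section
/- Let G be a subgroup of S_n with ℓ = [S_n : G] and let θ = (θ_1,…,θ_ℓ) be a set of secondary invariants for ℚ[x_1,…,x_n]^G with each θ_j ∈ ℤ[x_1,…,x_n]^G. Then the determinant of the ℓ×ℓ matrix M(θ) = (γ_i·θ_j) is a nonzero polynomial in ℤ[x_1,…,x_n]. -/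
/-!
A vector `v ≠ 0` in the kernel of `M(θ)` gives `∑_j γ_i(θ_j) v_j = 0` for every coset
representative, hence, by `G`-invariance of the `θ_j`, `∑_j θ_j τ(v_j) = 0` for every `τ ∈ S_n`.
Multiplying by `τ(m)` and summing over `τ` yields the relation `∑_j Sym(v_j m) θ_j = 0` with
symmetric coefficients, so all `Sym(v_j m)` vanish by uniqueness of the decomposition over `ℚ`.
Dedekind's independence of the characters `τ` shows that this is impossible for `v_j ≠ 0`.
-/

open MvPolynomial

open Equiv Matrix

section Symmetrize

variable {σ R : Type*} [CommRing R]

theorem rename_perm_injective [Nontrivial R] :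
    Function.Injective fun τ : Perm σ => (rename τ : MvPolynomial σ R →ₐ[R] MvPolynomial σ R) := by
  intro τ τ' h
  ext i
  simpa using congrArg (fun f : MvPolynomial σ R →ₐ[R] MvPolynomial σ R => f (X i)) h

variable [DecidableEq σ] [Fintype σ]

noncomputable def symmetrize (p : MvPolynomial σ R) : MvPolynomial σ R :=
  ∑ τ : Perm σ, rename τ p

theorem symmetrize_isSymmetric (p : MvPolynomial σ R) : (symmetrize p).IsSymmetric := by
  intro e
  simp only [symmetrize, map_sum, rename_rename]
  exact Fintype.sum_equiv (Equiv.mulLeft e) _ _ fun τ => rfl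

/-- If all `symmetrize (p * m)` vanished, then `∑_τ τ(p) • τ = 0` would be a nontrivial
linear relation among the distinct ring endomorphisms `τ`, contradicting Dedekind's
independence of characters. -/
theorem exists_symmetrize_mul_ne_zero [IsDomain R] {p : MvPolynomial σ R} (hp : p ≠ 0) :
    ∃ m, symmetrize (p * m) ≠ 0 := by
  by_contra! h
  have hind := (linearIndependent_monoidHom (MvPolynomial σ R) (MvPolynomial σ R)).comp
    (fun τ : Perm σ => ((rename τ : MvPolynomial σ R →ₐ[R] _) : MvPolynomial σ R →* _))
    fun τ τ' e => rename_perm_injective (R := R) (AlgHom.ext (DFunLike.congr_fun e :))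
  have := Fintype.linearIndependent_iff.1 hind (fun τ => rename τ p) (funext fun m => by
    simpa [symmetrize] using h m) 1
  exact hp (by simpa using this)

theorem sum_symmetrize_mul_eq_zero {ι : Type*} [Fintype ι] {v θ : ι → MvPolynomial σ R}
    (h : ∀ τ : Perm σ, ∑ j, rename τ (v j) * θ j = 0) (m : MvPolynomial σ R) :
    ∑ j, symmetrize (v j * m) * θ j = 0 := by
  simp only [symmetrize, Finset.sum_mul, map_mul]
  rw [Finset.sum_comm]
  refine Finset.sum_eq_zero fun τ _ => ?_
  simp_rw [mul_right_comm _ (rename τ m), ← Finset.sum_mul, h τ, zero_mul]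

end Symmetrize

theorem PermInvariant.rename_eq_of_inv_mul_mem {n : ℕ} {G : Subgroup (Perm (Fin n))}
    {R : Type*} [CommSemiring R] {f : MvPolynomial (Fin n) R} (hf : PermInvariant G f)
    {σ τ : Perm (Fin n)} (h : τ⁻¹ * σ ∈ G) : rename σ f = rename τ f := by
  conv_rhs => rw [← hf _ h]
  rw [rename_rename, ← Perm.coe_mul, mul_inv_cancel_left]

theorem sum_rename_mul_eq_zero_of_mulVec_eq_zero {n ℓ : ℕ} {G : Subgroup (Perm (Fin n))}
    {R : Type*} [CommRing R] {θ v : Fin ℓ → MvPolynomial (Fin n) R}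
    {γ : Fin ℓ → Perm (Fin n)} (hθ : ∀ j, PermInvariant G (θ j)) (hγ : IsCosetReps G ℓ γ)
    (hv : secMatrix γ θ *ᵥ v = 0) (τ : Perm (Fin n)) :
    ∑ j, rename τ (v j) * θ j = 0 := by
  obtain ⟨i, hi, -⟩ := hγ τ⁻¹
  have hrow : ∑ j, rename (τ⁻¹ : Perm (Fin n)) (θ j) * v j = 0 := by
    simp_rw [(hθ _).rename_eq_of_inv_mul_mem hi]
    simpa [Matrix.mulVec, dotProduct, secMatrix] using congrFun hv i
  have := congrArg (rename τ) hrow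
  simpa [map_sum, rename_rename, mul_comm] using this

theorem IsSecondaries.eq_zero_of_sum_mul_eq_zero {n ℓ : ℕ} {G : Subgroup (Perm (Fin n))}
    {θ : Fin ℓ → MvPolynomial (Fin n) ℤ} (hθ : IsSecondaries G ℓ θ)
    {c : Fin ℓ → MvPolynomial (Fin n) ℤ} (hc : ∀ j, (c j).IsSymmetric)
    (h : ∑ j, c j * θ j = 0) : c = 0 := by
  obtain ⟨c₀, -, huniq⟩ := hθ.2.2 0 fun _ _ => map_zero _
  have hmap : (fun j => map (Int.castRingHom ℚ) (c j)) = 0 := by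
    rw [huniq _ ⟨fun j => (hc j).map _, by simpa using (congrArg (map (Int.castRingHom ℚ)) h).symm⟩,
      ← huniq 0 ⟨fun _ => IsSymmetric.zero, by simp⟩]
  funext j
  exact map_injective _ (Int.castRingHom ℚ).injective_int (by simpa using congrFun hmap j)

theorem stmt2_general {n : ℕ} (G : Subgroup (Equiv.Perm (Fin n))) (ℓ : ℕ)
    (θ : Fin ℓ → MvPolynomial (Fin n) ℤ) (hθ : IsSecondaries G ℓ θ)
    (γ : Fin ℓ → Equiv.Perm (Fin n)) (hγ : IsCosetReps G ℓ γ) :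
    (secMatrix γ θ).det ≠ 0 := by
  intro hdet
  obtain ⟨v, hv, hMv⟩ := Matrix.exists_mulVec_eq_zero_iff.2 hdet
  obtain ⟨j, hj⟩ := Function.ne_iff.1 hv
  obtain ⟨m, hm⟩ := exists_symmetrize_mul_ne_zero hj
  have hrel := sum_rename_mul_eq_zero_of_mulVec_eq_zero hθ.2.1 hγ hMv
  have hsym := hθ.eq_zero_of_sum_mul_eq_zero (fun j => symmetrize_isSymmetric (v j * m))
    (sum_symmetrize_mul_eq_zero hrel m)
  exact hm (congrFun hsym j)

/-- The determinant of the `ℓ×ℓ` matrix `M(θ) = (γ_i·θ_j)` is a nonzero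
polynomial in `ℤ[x_1,…,x_n]`. -/
theorem stmt2 {n : ℕ} (G : Subgroup (Equiv.Perm (Fin n))) (ℓ : ℕ) (hℓ : ℓ = G.index)
    (θ : Fin ℓ → MvPolynomial (Fin n) ℤ) (hθ : IsSecondaries G ℓ θ)
    (γ : Fin ℓ → Equiv.Perm (Fin n)) (hγ : IsCosetReps G ℓ γ) :
    (secMatrix γ θ).det ≠ 0 :=
  stmt2_general G ℓ θ hθ γ hγ
end

section
/- Let V = ℂ^n, let Σ ≤ GL(V) be a finite group, let G ≤ Σ with ℓ = [Σ:G], and let 𝒮 = Σ/G be the set of left cosets with its Σ-action. Let ℬ be a single Σ-orbit of reflecting hyperplanes of Σ. Then the number of nonidentity elements of G which fix pointwise some hyperplane in ℬ equals Σ_{P∈ℬ} ( |C_P| · o(P) / ℓ − 1 ), where for P ∈ ℬ, C_P is the subgroup of elements of Σ fixing P pointwise and o(P) is the number of orbits of C_P on 𝒮. -/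
open MvPolynomial

/-- The fixed-point subspace of a linear automorphism `g` of `ℂ^n`. -/
noncomputable def fixedSubspace {n : ℕ} (g : (Fin n → ℂ) ≃ₗ[ℂ] (Fin n → ℂ)) :
    Submodule ℂ (Fin n → ℂ) where
  carrier := {v | g v = v}
  add_mem' := by
    intro a b ha hb
    simp only [Set.mem_setOf_eq] at *
    rw [map_add, ha, hb]
  zero_mem' := by simp
  smul_mem' := by
    intro c v hv
    simp only [Set.mem_setOf_eq] at *
    rw [map_smul, hv]

/-- `g` is a reflection: a nonidentity linear automorphism whose fixed-point subspace is a
hyperplane of `ℂ^n`. -/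
def IsReflection {n : ℕ} (g : (Fin n → ℂ) ≃ₗ[ℂ] (Fin n → ℂ)) : Prop :=
  g ≠ 1 ∧ Module.finrank ℂ (fixedSubspace g) = n - 1

/-- The set of reflecting hyperplanes of a group `Sg` of linear automorphisms of `ℂ^n`. -/
def reflHyperplanes {n : ℕ} (Sg : Subgroup ((Fin n → ℂ) ≃ₗ[ℂ] (Fin n → ℂ))) :
    Set (Submodule ℂ (Fin n → ℂ)) :=
  {P | ∃ g ∈ Sg, IsReflection g ∧ fixedSubspace g = P}

/-- The subgroup `C_P` of elements of `Sg` fixing `P` pointwise. -/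
noncomputable def pointwiseStab {n : ℕ} (Sg : Subgroup ((Fin n → ℂ) ≃ₗ[ℂ] (Fin n → ℂ)))
    (P : Submodule ℂ (Fin n → ℂ)) : Subgroup ↥Sg where
  carrier := {g | ∀ v ∈ P, (g : (Fin n → ℂ) ≃ₗ[ℂ] (Fin n → ℂ)) v = v}
  one_mem' := by
    intro v hv
    rfl
  mul_mem' := by
    intro a b ha hb v hv
    have : (↑(a * b) : (Fin n → ℂ) ≃ₗ[ℂ] (Fin n → ℂ)) v
        = (a : (Fin n → ℂ) ≃ₗ[ℂ] (Fin n → ℂ)) ((b : (Fin n → ℂ) ≃ₗ[ℂ] (Fin n → ℂ)) v) := rfl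
    rw [this, hb v hv, ha v hv]
  inv_mem' := by
    intro a ha v hv
    have h1 : (a : (Fin n → ℂ) ≃ₗ[ℂ] (Fin n → ℂ)) v = v := ha v hv
    have : (↑(a⁻¹) : (Fin n → ℂ) ≃ₗ[ℂ] (Fin n → ℂ)) v
        = ((a : (Fin n → ℂ) ≃ₗ[ℂ] (Fin n → ℂ)).symm) v := rfl
    rw [this]
    conv_lhs => rw [← h1]
    exact (a : (Fin n → ℂ) ≃ₗ[ℂ] (Fin n → ℂ)).symm_apply_apply v

/-- The number of orbits of `C_P` acting on the set `𝒮 = Sg/G` of left cosets of `G`. -/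
noncomputable def numOrbits {n : ℕ} (Sg G : Subgroup ((Fin n → ℂ) ≃ₗ[ℂ] (Fin n → ℂ)))
    (P : Submodule ℂ (Fin n → ℂ)) : ℕ :=
  Nat.card (MulAction.orbitRel.Quotient ↥(pointwiseStab Sg P) (↥Sg ⧸ G.subgroupOf Sg))

/-- `ℬ` is a `Sg`-orbit of reflecting hyperplanes of `Sg`. -/
def IsHyperplaneOrbit {n : ℕ} (Sg : Subgroup ((Fin n → ℂ) ≃ₗ[ℂ] (Fin n → ℂ)))
    (ℬ : Set (Submodule ℂ (Fin n → ℂ))) : Prop :=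
  ℬ.Nonempty ∧ ℬ ⊆ reflHyperplanes Sg ∧
  (∀ P ∈ ℬ, ∀ σ ∈ Sg, P.map (σ : (Fin n → ℂ) ≃ₗ[ℂ] (Fin n → ℂ)).toLinearMap ∈ ℬ) ∧
  ∀ P ∈ ℬ, ∀ Q ∈ ℬ, ∃ σ ∈ Sg, P.map (σ : (Fin n → ℂ) ≃ₗ[ℂ] (Fin n → ℂ)).toLinearMap = Q

/-!
Let `X = Σ/G`. Burnside's lemma for `C_P` acting on `X` gives
`|C_P| · o(P) = ℓ + ∑_{1 ≠ c ∈ C_P} |X^c|`. A nonidentity element fixing a hyperplane pointwise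
has exactly that hyperplane as its fixed space, so the sets `C_P \ {1}`, `P ∈ ℬ`, partition the
set `R` of nonidentity elements of `Σ` whose fixed space lies in `ℬ`, and `R` is closed under
conjugation. Finally `|X^c| · |G| = #{σ | σ⁻¹ c σ ∈ G}`, so double counting the pairs `(c, σ)`
with `c ∈ R` gives `∑_{c ∈ R} |X^c| = ℓ · |R ∩ G|`.
-/

open Finset MulAction

section GroupCounting

variable {Γ : Type*} [Group Γ]

theorem card_fixedBy_quotient_mul_card (H : Subgroup Γ) (c : Γ) :
    Nat.card (fixedBy (Γ ⧸ H) c) * Nat.card H = Nat.card {σ : Γ // σ⁻¹ * c * σ ∈ H} := by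
  have hpre : {σ : Γ // σ⁻¹ * c * σ ∈ H} ≃ QuotientGroup.mk ⁻¹' fixedBy (Γ ⧸ H) c :=
    Equiv.subtypeEquivRight fun σ => by
      rw [Set.mem_preimage, mem_fixedBy, Quotient.smul_mk, smul_eq_mul, QuotientGroup.eq,
        show (c * σ)⁻¹ * σ = (σ⁻¹ * c * σ)⁻¹ by group, inv_mem_iff]
  rw [Nat.card_congr hpre, Nat.card_congr (QuotientGroup.preimageMkEquivSubgroupProdSet H _),
    Nat.card_prod, mul_comm]

theorem card_conj_filter_mem (H : Subgroup Γ) [DecidablePred (· ∈ H)]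
    {R : Finset Γ} (hR : ∀ c ∈ R, ∀ σ : Γ, σ⁻¹ * c * σ ∈ R) (σ : Γ) :
    #{c ∈ R | σ⁻¹ * c * σ ∈ H} = #{c ∈ R | c ∈ H} := by
  refine card_nbij' (fun c => σ⁻¹ * c * σ) (fun d => σ * d * σ⁻¹) ?_ ?_ ?_ ?_
  · intro c hc
    simp only [coe_filter, Set.mem_ofPred_eq] at hc ⊢
    exact ⟨hR c hc.1 σ, hc.2⟩
  · intro d hd
    simp only [coe_filter, Set.mem_ofPred_eq] at hd ⊢
    exact ⟨by simpa using hR d hd.1 σ⁻¹, by simpa [mul_assoc] using hd.2⟩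
  · intro c _; group
  · intro d _; group

theorem sum_card_fixedBy_quotient [Fintype Γ] (H : Subgroup Γ) {R : Finset Γ}
    (hR : ∀ c ∈ R, ∀ σ : Γ, σ⁻¹ * c * σ ∈ R) :
    ∑ c ∈ R, Nat.card (fixedBy (Γ ⧸ H) c) = H.index * Nat.card ↥((R : Set Γ) ∩ H) := by
  classical
  have hcard : Nat.card ↥((R : Set Γ) ∩ H) = #{c ∈ R | c ∈ H} := by
    rw [show (R : Set Γ) ∩ H = ↑{c ∈ R | c ∈ H} by ext; simp, Nat.card_coe_set_eq,
      Set.ncard_coe_finset]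
  refine Nat.eq_of_mul_eq_mul_right (Nat.card_pos (α := H)) ?_
  calc (∑ c ∈ R, Nat.card (fixedBy (Γ ⧸ H) c)) * Nat.card H
      = ∑ c ∈ R, #{σ | σ⁻¹ * c * σ ∈ H} := by
        rw [sum_mul]
        refine sum_congr rfl fun c _ => ?_
        rw [card_fixedBy_quotient_mul_card, Nat.card_eq_fintype_card, Fintype.card_subtype]
    _ = ∑ σ : Γ, #{c ∈ R | σ⁻¹ * c * σ ∈ H} :=
        sum_card_bipartiteAbove_eq_sum_card_bipartiteBelow _
    _ = Nat.card Γ * #{c ∈ R | c ∈ H} := by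
        rw [sum_congr rfl fun σ _ => card_conj_filter_mem H hR σ, sum_const, card_univ,
          smul_eq_mul, Nat.card_eq_fintype_card]
    _ = H.index * Nat.card ↥((R : Set Γ) ∩ H) * Nat.card H := by
        rw [hcard, mul_right_comm, H.index_mul_card]

theorem card_mul_card_orbits_eq_card_add_sum_fixedBy [Fintype Γ] [DecidableEq Γ] {X : Type*}
    [MulAction Γ X] [Finite X] (C : Subgroup Γ) [DecidablePred (· ∈ C)] :
    Nat.card C * Nat.card (orbitRel.Quotient C X) =
      Nat.card X + ∑ c with c ∈ C ∧ c ≠ 1, Nat.card (fixedBy X c) := by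
  have : Fintype X := Fintype.ofFinite X
  have : ∀ c : C, Fintype (fixedBy X c) := fun _ => Fintype.ofFinite _
  have : Fintype (orbitRel.Quotient C X) := Fintype.ofFinite _
  have hburnside := sum_card_fixedBy_eq_card_orbits_mul_card_group C X
  simp only [← Nat.card_eq_fintype_card] at hburnside
  have hsub : ∑ c : C, Nat.card (fixedBy X c) = ∑ c with c ∈ C, Nat.card (fixedBy X c) :=
    (sum_subtype _ (by simp) fun c => Nat.card (fixedBy X c)).symm
  have hsplit : ({c | c ∈ C} : Finset Γ) = insert 1 ({c | c ∈ C ∧ c ≠ 1} : Finset Γ) := by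
    ext c; by_cases h : c = 1 <;> simp [h, C.one_mem]
  rw [mul_comm, ← hburnside, hsub, hsplit, sum_insert (by simp), fixedBy_one_eq_univ,
    Nat.card_univ]

theorem card_inter_subgroupOf {Ω : Type*} [Group Ω] {G S : Subgroup Ω} (hGS : G ≤ S)
    (p : Ω → Prop) :
    Nat.card ↥({c : S | p c} ∩ G.subgroupOf S) = Nat.card {g : Ω // g ∈ G ∧ p g} :=
  Nat.card_congr
    { toFun := fun c => ⟨c.1, c.2.2, c.2.1⟩
      invFun := fun g => ⟨⟨g, hGS g.2.1⟩, g.2.2, g.2.1⟩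
      left_inv := fun _ => rfl
      right_inv := fun _ => rfl }

end GroupCounting

section Reflections

variable {n : ℕ}

local notation "GLℂ" n => (Fin n → ℂ) ≃ₗ[ℂ] (Fin n → ℂ)

theorem mem_fixedSubspace {g : GLℂ n} {v : Fin n → ℂ} : v ∈ fixedSubspace g ↔ g v = v :=
  Iff.rfl

theorem fixedSubspace_ne_top {g : GLℂ n} (hg : g ≠ 1) : fixedSubspace g ≠ ⊤ :=
  fun h => hg <| LinearEquiv.ext fun _ => mem_fixedSubspace.1 (h ▸ Submodule.mem_top)

theorem fixedSubspace_conj (σ g : GLℂ n) :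
    fixedSubspace (σ * g * σ⁻¹) = (fixedSubspace g).map σ.toLinearMap := by
  ext v
  rw [Submodule.mem_map_equiv, mem_fixedSubspace, mem_fixedSubspace]
  change σ (g (σ.symm v)) = v ↔ _
  rw [← σ.eq_symm_apply]

theorem fixedSubspace_eq_of_le {g : GLℂ n} (hg : g ≠ 1) {P : Submodule ℂ (Fin n → ℂ)}
    (hP : Module.finrank ℂ P = n - 1) (hle : P ≤ fixedSubspace g) : fixedSubspace g = P := by
  have hlt : Module.finrank ℂ (fixedSubspace g) < n := by
    simpa using Submodule.finrank_lt (fixedSubspace_ne_top hg)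
  exact (Submodule.eq_of_le_of_finrank_le hle (by omega)).symm

variable {Sg : Subgroup (GLℂ n)} {ℬ : Set (Submodule ℂ (Fin n → ℂ))}

theorem finrank_of_mem_reflHyperplanes {P : Submodule ℂ (Fin n → ℂ)}
    (hP : P ∈ reflHyperplanes Sg) : Module.finrank ℂ P = n - 1 := by
  obtain ⟨g, -, ⟨-, hdim⟩, rfl⟩ := hP
  exact hdim

theorem reflHyperplanes_finite (Sg : Subgroup (GLℂ n)) [Finite Sg] :
    (reflHyperplanes Sg).Finite :=
  (Set.finite_range fun g : Sg => fixedSubspace (g : GLℂ n)).subset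
    fun _ ⟨g, hg, _, hP⟩ => ⟨⟨g, hg⟩, hP⟩

theorem mem_pointwiseStab_and_ne_one_iff {P : Submodule ℂ (Fin n → ℂ)}
    (hP : Module.finrank ℂ P = n - 1) {c : Sg} :
    c ∈ pointwiseStab Sg P ∧ c ≠ 1 ↔ (c : GLℂ n) ≠ 1 ∧ fixedSubspace c = P := by
  rw [ne_eq, ← OneMemClass.coe_eq_one]
  constructor
  · rintro ⟨hc, hne⟩
    exact ⟨hne, fixedSubspace_eq_of_le hne hP hc⟩
  · rintro ⟨hne, rfl⟩
    exact ⟨fun _ hv => hv, hne⟩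

theorem ne_one_and_exists_fixed_iff (hℬ : ℬ ⊆ reflHyperplanes Sg) (g : GLℂ n) :
    g ≠ 1 ∧ (∃ P ∈ ℬ, ∀ v ∈ P, g v = v) ↔ g ≠ 1 ∧ fixedSubspace g ∈ ℬ := by
  refine and_congr_right fun hg => ⟨?_, fun h => ⟨_, h, fun _ hv => hv⟩⟩
  rintro ⟨P, hPℬ, hfix⟩
  rwa [fixedSubspace_eq_of_le hg (finrank_of_mem_reflHyperplanes (hℬ hPℬ)) hfix]

theorem conj_ne_one_and_fixedSubspace_mem
    (hℬ : ∀ P ∈ ℬ, ∀ σ ∈ Sg, P.map (σ : GLℂ n).toLinearMap ∈ ℬ)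
    {c : Sg} (hc : (c : GLℂ n) ≠ 1 ∧ fixedSubspace c ∈ ℬ) (σ : Sg) :
    ((σ⁻¹ * c * σ : Sg) : GLℂ n) ≠ 1 ∧ fixedSubspace (σ⁻¹ * c * σ : Sg) ∈ ℬ := by
  have hcoe : ((σ⁻¹ * c * σ : Sg) : GLℂ n) = (σ : GLℂ n)⁻¹ * c * ((σ : GLℂ n)⁻¹)⁻¹ := by
    simp
  rw [hcoe, fixedSubspace_conj, ne_eq, conj_eq_one_iff]
  exact ⟨hc.1, hℬ _ hc.2 _ (inv_mem σ.2)⟩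

theorem sum_card_fixedBy_of_fixedSubspace_mem [Fintype Sg]
    [DecidablePred fun c : Sg => (c : GLℂ n) ≠ 1 ∧ fixedSubspace c ∈ ℬ]
    {G : Subgroup (GLℂ n)} (hG : G ≤ Sg) (hrefl : ℬ ⊆ reflHyperplanes Sg)
    (hclosed : ∀ P ∈ ℬ, ∀ σ ∈ Sg, P.map (σ : GLℂ n).toLinearMap ∈ ℬ) :
    ∑ c ∈ univ.filter fun c : Sg => (c : GLℂ n) ≠ 1 ∧ fixedSubspace c ∈ ℬ,
        Nat.card (fixedBy (Sg ⧸ G.subgroupOf Sg) c) =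
      (G.subgroupOf Sg).index *
        Nat.card {g : GLℂ n // g ∈ G ∧ g ≠ 1 ∧ ∃ P ∈ ℬ, ∀ v ∈ P, g v = v} := by
  rw [sum_card_fixedBy_quotient _ fun c hc σ => mem_filter.2
      ⟨mem_univ _, conj_ne_one_and_fixedSubspace_mem hclosed (mem_filter.1 hc).2 σ⟩,
    coe_filter_univ, card_inter_subgroupOf hG fun g => g ≠ 1 ∧ fixedSubspace g ∈ ℬ]
  simp only [ne_one_and_exists_fixed_iff hrefl]

open Classical in
theorem sum_card_pointwiseStab_mul_numOrbits [Fintype Sg] (G : Subgroup (GLℂ n))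
    {B : Finset (Submodule ℂ (Fin n → ℂ))} (hB : ∀ P ∈ B, Module.finrank ℂ P = n - 1) :
    ∑ P ∈ B, Nat.card (pointwiseStab Sg P) * numOrbits Sg G P =
      #B * (G.subgroupOf Sg).index +
        ∑ c ∈ univ.filter fun c : Sg => (c : GLℂ n) ≠ 1 ∧ fixedSubspace c ∈ B,
          Nat.card (fixedBy (Sg ⧸ G.subgroupOf Sg) c) := by
  have hP : ∀ P ∈ B, Nat.card (pointwiseStab Sg P) * numOrbits Sg G P =
      (G.subgroupOf Sg).index +
        ∑ c ∈ univ.filter fun c : Sg => (c : GLℂ n) ≠ 1 ∧ fixedSubspace c = P,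
          Nat.card (fixedBy (Sg ⧸ G.subgroupOf Sg) c) := fun P hPB => by
    refine (card_mul_card_orbits_eq_card_add_sum_fixedBy (X := Sg ⧸ G.subgroupOf Sg) _).trans ?_
    simp only [mem_pointwiseStab_and_ne_one_iff (hB P hPB)]
    rfl
  rw [sum_congr rfl hP, sum_add_distrib, sum_const, smul_eq_mul]
  simp only [← filter_filter, sum_fiberwise_eq_sum_filter]

end Reflections

/-- For a `Σ`-orbit `ℬ` of reflecting hyperplanes, the number of nonidentity
elements of `G` which fix pointwise some hyperplane in `ℬ` equals
`Σ_{P∈ℬ} (|C_P|·o(P)/ℓ − 1)`, where `o(P)` is the number of orbits of `C_P` on `𝒮 = Σ/G`. -/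
theorem stmt7 {n : ℕ} (Sg G : Subgroup ((Fin n → ℂ) ≃ₗ[ℂ] (Fin n → ℂ)))
    (hfin : Finite ↥Sg) (hG : G ≤ Sg) (ℓ : ℕ) (hℓ : ℓ = (G.subgroupOf Sg).index)
    (ℬ : Set (Submodule ℂ (Fin n → ℂ))) (hℬ : IsHyperplaneOrbit Sg ℬ) :
    (Nat.card {g : (Fin n → ℂ) ≃ₗ[ℂ] (Fin n → ℂ) //
        g ∈ G ∧ g ≠ 1 ∧ ∃ P ∈ ℬ, ∀ v ∈ P, g v = v} : ℚ) =
      ∑ᶠ P ∈ ℬ, ((Nat.card ↥(pointwiseStab Sg P) : ℚ) * (numOrbits Sg G P : ℚ) / ℓ - 1) := by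
  classical
  have := hfin
  have : Fintype Sg := .ofFinite _
  obtain ⟨-, hrefl, hclosed, -⟩ := hℬ
  have hfinite : ℬ.Finite := (reflHyperplanes_finite Sg).subset hrefl
  have hℓ0 : (ℓ : ℚ) ≠ 0 := by
    rw [hℓ]
    exact_mod_cast Subgroup.index_ne_zero_of_finite
  have hsum : ∑ P ∈ hfinite.toFinset, (Nat.card (pointwiseStab Sg P) : ℚ) * numOrbits Sg G P =
      #hfinite.toFinset * ℓ + ℓ * Nat.card {g : (Fin n → ℂ) ≃ₗ[ℂ] (Fin n → ℂ) //
        g ∈ G ∧ g ≠ 1 ∧ ∃ P ∈ ℬ, ∀ v ∈ P, g v = v} := by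
    have h := sum_card_pointwiseStab_mul_numOrbits (Sg := Sg) G fun P hP =>
      finrank_of_mem_reflHyperplanes (hrefl (hfinite.mem_toFinset.1 hP))
    simp only [Set.Finite.mem_toFinset, sum_card_fixedBy_of_fixedSubspace_mem hG hrefl hclosed,
      ← hℓ] at h
    exact_mod_cast h
  rw [finsum_mem_eq_finite_toFinset_sum _ hfinite, sum_sub_distrib, ← sum_div, hsum, sum_const,
    nsmul_eq_mul, mul_one]
  field_simp
  ring
end

section
/- Let n ≥ 2. In ℤ[x_1,…,x_n], let m = ∏_{i=1}^{n−1} x_i^{n−i} and m' = x_n · ∏_{i=1}^{n−2} x_i^{n−i}, and let Z(m), Z(m') denote their A_n-orbit sums (sums of the distinct monomials in the A_n-orbit). Then Z(m') − Z(m) = −∏_{1≤i<j≤n} (x_i − x_j). -/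
open MvPolynomial

/-- The submodule of `G`-invariant polynomials in `R[x_1,…,x_n]`. -/
def invariantSubmodule {n : ℕ} (G : Subgroup (Equiv.Perm (Fin n))) (R : Type*)
    [CommSemiring R] : Submodule R (MvPolynomial (Fin n) R) where
  carrier := {f | PermInvariant G f}
  add_mem' := by
    intro a b ha hb g hg
    rw [map_add, ha g hg, hb g hg]
  zero_mem' := by
    intro g hg
    simp
  smul_mem' := by
    intro c f hf g hg
    rw [smul_eq_C_mul, map_mul, rename_C, hf g hg]

/-- The `G`-orbit of the exponent vector `e`, as a finite set. -/
noncomputable def expOrbit {n : ℕ} (G : Subgroup (Equiv.Perm (Fin n)))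
    (e : Fin n →₀ ℕ) : Finset (Fin n →₀ ℕ) :=
  ((Set.toFinite (G : Set (Equiv.Perm (Fin n)))).image
    (fun g : Equiv.Perm (Fin n) => Finsupp.mapDomain (⇑g) e)).toFinset

/-- The `G`-orbit sum `Z(m)` of the monomial with exponent vector `e`: the sum of the
distinct monomials in the `G`-orbit of `m`. -/
noncomputable def orbitSum {n : ℕ} (G : Subgroup (Equiv.Perm (Fin n))) (R : Type*)
    [CommSemiring R] (e : Fin n →₀ ℕ) : MvPolynomial (Fin n) R :=
  ∑ e' ∈ expOrbit G e, monomial e' 1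

/-!
The exponent vector `e = (n-1, n-2, …, 1, 0)` of `m` has distinct entries, so `σ ↦ σ·e` is
injective and `Z(m)` is the sum of `x^(σ·e)` over the even permutations `σ`. The exponent vector
of `m'` is `t·e` for the transposition `t = (n-1 n)`, so `Z(m')` is the same sum over the odd
permutations `σ t`. Hence `Z(m) - Z(m') = ∑_σ sign σ · x^(σ·e)`, which is the determinant
`det (x_i ^ (n-1-j))`, i.e. the Vandermonde product `∏_{i<j} (x_i - x_j)`.
-/

open Finset Equiv Equiv.Perm

theorem Finsupp.mapDomain_perm_injective {α : Type*} {e : α →₀ ℕ} (he : Function.Injective e) :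
    Function.Injective fun σ : Perm α => Finsupp.mapDomain σ e := by
  intro σ τ h
  have h' : ∀ a, e (σ.symm a) = e (τ.symm a) := fun a => by
    simpa only [Finsupp.mapDomain_equiv_apply] using DFunLike.congr_fun h a
  simpa using congrArg Equiv.symm (Equiv.ext fun a => he (h' a))

section OrbitSum

variable {n : ℕ} {R : Type*} [CommSemiring R]

theorem expOrbit_eq_image (G : Subgroup (Perm (Fin n))) [DecidablePred (· ∈ G)]
    (e : Fin n →₀ ℕ) :
    expOrbit G e = (univ.filter (· ∈ G)).image fun σ : Perm (Fin n) => Finsupp.mapDomain σ e := by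
  ext
  simp [expOrbit]

theorem orbitSum_eq_sum_of_injective (G : Subgroup (Perm (Fin n))) [DecidablePred (· ∈ G)]
    {e : Fin n →₀ ℕ} (he : Function.Injective e) :
    orbitSum G R e = ∑ σ ∈ univ.filter (· ∈ G), monomial (Finsupp.mapDomain σ e) 1 := by
  rw [orbitSum, expOrbit_eq_image, sum_image fun σ _ τ _ h => Finsupp.mapDomain_perm_injective he h]

theorem orbitSum_mapDomain_eq_sum_of_injective (G : Subgroup (Perm (Fin n)))
    [DecidablePred (· ∈ G)] {e : Fin n →₀ ℕ} (he : Function.Injective e) (t : Perm (Fin n)) :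
    orbitSum G R (Finsupp.mapDomain t e) =
      ∑ σ ∈ univ.filter (· ∈ G), monomial (Finsupp.mapDomain (σ * t) e) 1 := by
  have hte : Function.Injective (Finsupp.mapDomain t e) := by
    rw [show ⇑(Finsupp.mapDomain t e) = e ∘ t.symm from funext (Finsupp.mapDomain_equiv_apply e)]
    exact he.comp t.symm.injective
  simp only [orbitSum_eq_sum_of_injective G hte, coe_mul, Finsupp.mapDomain_comp]

end OrbitSum

theorem Equiv.Perm.sum_sign_smul_eq_sub {α M : Type*} [Fintype α] [DecidableEq α]
    [DecidablePred (· ∈ alternatingGroup α)] [AddCommGroup M] {t : Perm α} (ht : sign t = -1)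
    (f : Perm α → M) :
    ∑ σ, sign σ • f σ = ∑ σ ∈ univ.filter (· ∈ alternatingGroup α), f σ -
      ∑ σ ∈ univ.filter (· ∈ alternatingGroup α), f (σ * t) := by
  have hodd : ∑ σ ∈ univ.filter (· ∉ alternatingGroup α), sign σ • f σ =
      -∑ σ ∈ univ.filter (· ∈ alternatingGroup α), f (σ * t) := by
    rw [← sum_neg_distrib]
    have h_not_mem : ∀ σ, σ ∉ alternatingGroup α ↔ sign σ = -1 := fun σ =>
      mem_alternatingGroup.not.trans Int.units_ne_iff_eq_neg
    refine sum_nbij' (· * t⁻¹) (· * t) ?_ ?_ ?_ ?_ ?_ <;>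
      simp_all [mem_alternatingGroup]
  rw [← sum_filter_add_sum_filter_not univ (· ∈ alternatingGroup α), hodd, sub_eq_add_neg]
  congr 1
  exact sum_congr rfl fun σ hσ => by simp_all [mem_alternatingGroup]

theorem MvPolynomial.prod_X_pow_eq_monomial_mapDomain {α R : Type*} [CommSemiring R] [Fintype α]
    (e : α →₀ ℕ) (σ : Perm α) :
    ∏ i, (X (σ i) : MvPolynomial α R) ^ e i = monomial (Finsupp.mapDomain σ e) 1 := by
  rw [← rename_monomial, monomial_eq, C_1, one_mul, Finsupp.prod_fintype _ _ (by simp), map_prod]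
  simp only [map_pow, rename_X]

theorem sum_sign_smul_monomial_mapDomain_eq_prod_sub (R : Type*) [CommRing R] (n : ℕ) :
    ∑ σ : Perm (Fin n), sign σ •
        monomial (Finsupp.mapDomain σ
          (Finsupp.equivFunOnFinite.symm fun i : Fin n => n - 1 - (i : ℕ))) (1 : R) =
      ∏ q ∈ univ.filter (fun q : Fin n × Fin n => q.1 < q.2), (X q.1 - X q.2) := by
  have hdet := Matrix.det_projVandermonde (1 : Fin n → MvPolynomial (Fin n) R) X
  simp only [Matrix.det_apply, Matrix.projVandermonde_apply, Pi.one_apply, one_pow, one_mul] at hdet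
  have hexp (i : Fin n) : n - 1 - (i : ℕ) = i.rev := by rw [Fin.val_rev]; omega
  simp only [← prod_X_pow_eq_monomial_mapDomain, Finsupp.coe_equivFunOnFinite_symm, hexp, hdet]
  rw [prod_filter, Fintype.prod_prod_type]
  simp [← prod_filter, filter_lt_eq_Ioi]

/-- For `n ≥ 2`, with `m = ∏_{i=1}^{n−1} x_i^{n−i}` and
`m' = x_n·∏_{i=1}^{n−2} x_i^{n−i}`, the `A_n`-orbit sums satisfy
`Z(m') − Z(m) = −∏_{1≤i<j≤n}(x_i − x_j)` in `ℤ[x_1,…,x_n]`. -/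
theorem stmt16 (n : ℕ) (hn : 2 ≤ n) :
    orbitSum (alternatingGroup (Fin n)) ℤ
        (Finsupp.equivFunOnFinite.symm fun i : Fin n =>
          if (i : ℕ) = n - 1 then 1 else if (i : ℕ) = n - 2 then 0 else n - 1 - (i : ℕ)) -
      orbitSum (alternatingGroup (Fin n)) ℤ
        (Finsupp.equivFunOnFinite.symm fun i : Fin n => n - 1 - (i : ℕ)) =
    -∏ q ∈ Finset.univ.filter (fun q : Fin n × Fin n => q.1 < q.2), (X q.1 - X q.2) := by
  classical
  set e : Fin n →₀ ℕ := Finsupp.equivFunOnFinite.symm fun i : Fin n => n - 1 - (i : ℕ)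
  have he : Function.Injective e := fun i j h => by
    simp only [e, Finsupp.coe_equivFunOnFinite_symm] at h
    omega
  set t := swap (⟨n - 2, by omega⟩ : Fin n) ⟨n - 1, by omega⟩
  have ht : sign t = -1 := sign_swap (by simp [Fin.ext_iff]; omega)
  have hte : (Finsupp.equivFunOnFinite.symm fun i : Fin n =>
      if (i : ℕ) = n - 1 then 1 else if (i : ℕ) = n - 2 then 0 else n - 1 - (i : ℕ)) =
      Finsupp.mapDomain t e := by
    ext i
    simp only [t, e, Finsupp.mapDomain_equiv_apply, symm_swap, swap_apply_def, Fin.ext_iff,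
      Finsupp.coe_equivFunOnFinite_symm]
    split_ifs <;> simp only at * <;> omega
  rw [hte, orbitSum_mapDomain_eq_sum_of_injective _ he, orbitSum_eq_sum_of_injective _ he,
    ← sum_sign_smul_monomial_mapDomain_eq_prod_sub, sum_sign_smul_eq_sub ht, neg_sub]
end

section
/- Let n ≥ 2, let m = ∏_{i=1}^{n−1} x_i^{n−i}, and let Z(m) ∈ ℤ[x_1,…,x_n]^{A_n} be its A_n-orbit sum. Then for every prime p, 𝔽_p[x_1,…,x_n]^{A_n} = 𝔽_p[x_1,…,x_n]^{S_n} ⊕ 𝔽_p[x_1,…,x_n]^{S_n} · Z(m)‾, where Z(m)‾ is the reduction of Z(m) modulo p; in particular 𝔽_p[x_1,…,x_n]^{A_n} is a free 𝔽_p[x_1,…,x_n]^{S_n}-module of rank 2 (hence Cohen-Macaulay) for every prime p. -/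
open MvPolynomial

/-!
An `A_n`-invariant `f` is reduced by induction on the lexicographically largest decreasing
rearrangement `s` of an exponent of `f`; one clears the whole `S_n`-orbit of `s` at once.
If `s` has a repeated entry, its `A_n`- and `S_n`-orbits coincide and a multiple of the
`S_n`-orbit sum of `s` does it. Otherwise `s = l + δ` with `l` decreasing, and the symmetric
multiple `m_l · Z(δ)` of `Z(δ)` has coefficient `1` on the even and `0` on the odd rearrangements
of `s`, while all its exponents rearrange to something lexicographically at most `s`.

For uniqueness, applying a transposition `τ` to a relation `a + b Z(δ) = 0` with `a, b` symmetric
gives `b (Z(δ) - τ Z(δ)) = 0`. The lexicographic leading term of `Z(δ) - τ Z(δ)` is `x^δ`, so it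
is a non-zero-divisor over every ring and `b = 0`.
-/

variable {n : ℕ}

section Orbits

variable {G : Subgroup (Equiv.Perm (Fin n))} {R : Type*} [CommSemiring R]

lemma mapDomain_perm_mul (g h : Equiv.Perm (Fin n)) (e : Fin n →₀ ℕ) :
    Finsupp.mapDomain ⇑(g * h) e = Finsupp.mapDomain g (Finsupp.mapDomain h e) := by
  rw [Equiv.Perm.coe_mul, Finsupp.mapDomain_comp]

lemma mapDomain_perm_inv_mapDomain (g : Equiv.Perm (Fin n)) (e : Fin n →₀ ℕ) :
    Finsupp.mapDomain ⇑g⁻¹ (Finsupp.mapDomain g e) = e := by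
  rw [← mapDomain_perm_mul, inv_mul_cancel, Equiv.Perm.coe_one, Finsupp.mapDomain_id]

lemma mem_expOrbit {e v : Fin n →₀ ℕ} :
    v ∈ expOrbit G e ↔ ∃ g ∈ G, Finsupp.mapDomain g e = v := by
  simp [expOrbit]

lemma self_mem_expOrbit (e : Fin n →₀ ℕ) : e ∈ expOrbit G e :=
  mem_expOrbit.2 ⟨1, G.one_mem, Finsupp.mapDomain_id⟩

lemma mapDomain_mem_expOrbit {e v : Fin n →₀ ℕ} (hv : v ∈ expOrbit G e)
    {g : Equiv.Perm (Fin n)} (hg : g ∈ G) : Finsupp.mapDomain g v ∈ expOrbit G e := by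
  obtain ⟨h, hh, rfl⟩ := mem_expOrbit.1 hv
  exact mem_expOrbit.2 ⟨g * h, G.mul_mem hg hh, mapDomain_perm_mul g h e⟩

lemma expOrbit_subset_top (e : Fin n →₀ ℕ) : expOrbit G e ⊆ expOrbit ⊤ e := fun v hv => by
  obtain ⟨g, -, rfl⟩ := mem_expOrbit.1 hv
  exact mem_expOrbit.2 ⟨g, Subgroup.mem_top g, rfl⟩

lemma mem_expOrbit_top_trans {e v w : Fin n →₀ ℕ} (hv : v ∈ expOrbit ⊤ w) (hw : w ∈ expOrbit ⊤ e) :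
    v ∈ expOrbit ⊤ e := by
  obtain ⟨g, -, rfl⟩ := mem_expOrbit.1 hv
  exact mapDomain_mem_expOrbit hw (Subgroup.mem_top g)

lemma mem_expOrbit_top_comm {e v : Fin n →₀ ℕ} (hv : v ∈ expOrbit ⊤ e) : e ∈ expOrbit ⊤ v := by
  obtain ⟨g, -, rfl⟩ := mem_expOrbit.1 hv
  exact mem_expOrbit.2 ⟨g⁻¹, Subgroup.mem_top _, mapDomain_perm_inv_mapDomain g e⟩

lemma coeff_orbitSum (e v : Fin n →₀ ℕ) :
    coeff v (orbitSum G R e) = if v ∈ expOrbit G e then 1 else 0 := by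
  simp only [orbitSum, coeff_sum, coeff_monomial, Finset.sum_ite_eq']

lemma support_orbitSum_subset (e : Fin n →₀ ℕ) : (orbitSum G R e).support ⊆ expOrbit G e :=
  fun v hv => by_contra fun h => mem_support_iff.1 hv (by rw [coeff_orbitSum, if_neg h])

lemma map_orbitSum {S : Type*} [CommSemiring S] (φ : R →+* S) (e : Fin n →₀ ℕ) :
    map φ (orbitSum G R e) = orbitSum G S e := by
  simp only [orbitSum, map_sum, map_monomial, map_one]

lemma coeff_rename_perm (g : Equiv.Perm (Fin n)) (p : MvPolynomial (Fin n) R) (v : Fin n →₀ ℕ) :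
    coeff v (rename g p) = coeff (Finsupp.mapDomain ⇑g⁻¹ v) p := by
  conv_lhs => rw [← mapDomain_perm_inv_mapDomain g⁻¹ v, inv_inv]
  exact coeff_rename_mapDomain g g.injective p _

lemma PermInvariant.coeff_mapDomain {f : MvPolynomial (Fin n) R} (hf : PermInvariant G f)
    {g : Equiv.Perm (Fin n)} (hg : g ∈ G) (e : Fin n →₀ ℕ) :
    coeff (Finsupp.mapDomain g e) f = coeff e f := by
  rw [← coeff_rename_mapDomain g g.injective f e, hf g hg]

lemma permInvariant_orbitSum (e : Fin n →₀ ℕ) : PermInvariant G (orbitSum G R e) := by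
  intro g hg
  ext v
  rw [coeff_rename_perm, coeff_orbitSum, coeff_orbitSum]
  refine if_congr ⟨fun h => ?_, fun h => mapDomain_mem_expOrbit h (G.inv_mem hg)⟩ rfl rfl
  simpa [← mapDomain_perm_mul] using mapDomain_mem_expOrbit h hg

lemma isSymmetric_orbitSum_top (e : Fin n →₀ ℕ) : (orbitSum ⊤ R e).IsSymmetric :=
  fun g => permInvariant_orbitSum e g (Subgroup.mem_top g)

lemma perm_eq_of_mapDomain_eq {e : Fin n →₀ ℕ} (he : Function.Injective e)
    {g h : Equiv.Perm (Fin n)} (hgh : Finsupp.mapDomain g e = Finsupp.mapDomain h e) : g = h := by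
  refine inv_injective (Equiv.ext fun a => he ?_)
  simpa using DFunLike.congr_fun hgh a

lemma mapDomain_mem_expOrbit_alternatingGroup_iff {e : Fin n →₀ ℕ} (he : Function.Injective e)
    {g : Equiv.Perm (Fin n)} :
    Finsupp.mapDomain g e ∈ expOrbit (alternatingGroup (Fin n)) e ↔
      g ∈ alternatingGroup (Fin n) := by
  refine ⟨fun h => ?_, fun hg => mem_expOrbit.2 ⟨g, hg, rfl⟩⟩
  obtain ⟨h, hh, hhg⟩ := mem_expOrbit.1 h
  rwa [← perm_eq_of_mapDomain_eq he hhg]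

lemma expOrbit_alternatingGroup_eq_top {e : Fin n →₀ ℕ} (he : ¬ Function.Injective e) :
    expOrbit (alternatingGroup (Fin n)) e = expOrbit ⊤ e := by
  obtain ⟨i, j, hij, hne⟩ := Function.not_injective_iff.1 he
  have hswap : Finsupp.mapDomain (Equiv.swap i j) e = e := by
    ext a
    rw [Finsupp.mapDomain_equiv_apply, Equiv.symm_swap]
    rcases eq_or_ne a i with rfl | hai
    · rw [Equiv.swap_apply_left, hij]
    rcases eq_or_ne a j with rfl | haj
    · rw [Equiv.swap_apply_right, hij]
    · rw [Equiv.swap_apply_of_ne_of_ne hai haj]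
  refine (expOrbit_subset_top e).antisymm fun v hv => ?_
  obtain ⟨g, -, rfl⟩ := mem_expOrbit.1 hv
  rcases Int.units_eq_one_or (Equiv.Perm.sign g) with hg | hg
  · exact mem_expOrbit.2 ⟨g, hg, rfl⟩
  · refine mem_expOrbit.2 ⟨g * Equiv.swap i j, ?_, by rw [mapDomain_perm_mul, hswap]⟩
    rw [Equiv.Perm.mem_alternatingGroup, map_mul, hg, Equiv.Perm.sign_swap hne]
    rfl

lemma exists_sign_eq_neg_one (hn : 2 ≤ n) : ∃ τ : Equiv.Perm (Fin n), Equiv.Perm.sign τ = -1 :=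
  have := Fin.nontrivial_iff_two_le.2 hn
  Equiv.Perm.sign_surjective (Fin n) (-1)

end Orbits

section Rearrangement

lemma antitone_of_forall_lex_le {w : Fin n →₀ ℕ}
    (hw : ∀ v ∈ expOrbit ⊤ w, toLex v ≤ toLex w) : Antitone w := by
  intro i j hij
  by_contra! hlt
  have hij : i < j := lt_of_le_of_ne hij (by rintro rfl; exact hlt.false)
  refine (hw _ (mem_expOrbit.2 ⟨Equiv.swap i j, Subgroup.mem_top _, rfl⟩)).not_gt
    (Finsupp.lex_def.2 ⟨i, fun k hk => ?_, ?_⟩)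
  · show w k = Finsupp.mapDomain _ w k
    rw [Finsupp.mapDomain_equiv_apply, Equiv.symm_swap,
      Equiv.swap_apply_of_ne_of_ne hk.ne (hk.trans hij).ne]
  · show w i < Finsupp.mapDomain _ w i
    rwa [Finsupp.mapDomain_equiv_apply, Equiv.symm_swap, Equiv.swap_apply_left]

lemma eq_of_antitone_of_mem_expOrbit {v w : Fin n →₀ ℕ} (hv : Antitone v) (hw : Antitone w)
    (h : v ∈ expOrbit ⊤ w) : v = w := by
  obtain ⟨g, -, rfl⟩ := mem_expOrbit.1 h
  have hmono : Monotone (w ∘ ⇑(Fin.revPerm.trans g.symm)) := fun a b hab => by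
    simpa using hv (Fin.rev_le_rev.2 hab)
  have key := Tuple.unique_monotone hmono (τ := Fin.revPerm) (hw.comp Fin.rev_anti)
  ext a
  simpa using congrFun key (Fin.rev a)

lemma lex_le_of_mem_expOrbit {v w : Fin n →₀ ℕ} (hw : Antitone w) (hv : v ∈ expOrbit ⊤ w) :
    toLex v ≤ toLex w := by
  -- A lexicographic maximum `m` of the orbit is antitone, since a transposition would
  -- otherwise increase it; antitone rearrangements are unique, so `m = w`.
  obtain ⟨m, hm, hmax⟩ := (expOrbit ⊤ w).exists_max_image toLex ⟨w, self_mem_expOrbit w⟩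
  have hm_anti : Antitone m :=
    antitone_of_forall_lex_le fun u hu => hmax u (mem_expOrbit_top_trans hu hm)
  rw [← eq_of_antitone_of_mem_expOrbit hm_anti hw hm]
  exact hmax v hv

lemma eq_and_eq_of_add_eq {a b l m : Fin n →₀ ℕ} (hl : Antitone l) (hm : Antitone m)
    (ha : a ∈ expOrbit ⊤ l) (hb : b ∈ expOrbit ⊤ m) (h : a + b = l + m) : a = l ∧ b = m := by
  have hal := lex_le_of_mem_expOrbit hl ha
  have hbm := lex_le_of_mem_expOrbit hm hb
  by_contra hne
  refine (show toLex (a + b) < toLex (l + m) from ?_).ne (congrArg toLex h)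
  rcases not_and_or.1 hne with hne | hne
  · exact add_lt_add_of_lt_of_le (hal.lt_of_ne (toLex.injective.ne hne)) hbm
  · exact add_lt_add_of_le_of_lt hal (hbm.lt_of_ne (toLex.injective.ne hne))

noncomputable def sortDesc (v : Fin n →₀ ℕ) : Fin n →₀ ℕ :=
  Finsupp.mapDomain ⇑(Fin.revPerm.trans (Tuple.sort v))⁻¹ v

lemma antitone_sortDesc (v : Fin n →₀ ℕ) : Antitone (sortDesc v) := fun a b hab => by
  rw [sortDesc, Finsupp.mapDomain_equiv_apply, Finsupp.mapDomain_equiv_apply]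
  exact Tuple.monotone_sort v (Fin.rev_le_rev.2 hab)

lemma sortDesc_mem_expOrbit (v : Fin n →₀ ℕ) : sortDesc v ∈ expOrbit ⊤ v :=
  mem_expOrbit.2 ⟨_, Subgroup.mem_top _, rfl⟩

lemma sortDesc_eq_iff {s v : Fin n →₀ ℕ} (hs : Antitone s) : sortDesc v = s ↔ v ∈ expOrbit ⊤ s := by
  refine ⟨fun h => h ▸ mem_expOrbit_top_comm (sortDesc_mem_expOrbit v), fun hv => ?_⟩
  exact eq_of_antitone_of_mem_expOrbit (antitone_sortDesc v) hs
    (mem_expOrbit_top_trans (sortDesc_mem_expOrbit v) hv)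

lemma lex_sortDesc_add_le {a b l m : Fin n →₀ ℕ} (hl : Antitone l) (hm : Antitone m)
    (ha : a ∈ expOrbit ⊤ l) (hb : b ∈ expOrbit ⊤ m) : toLex (sortDesc (a + b)) ≤ toLex (l + m) := by
  rw [sortDesc, Finsupp.mapDomain_add]
  exact add_le_add
    (lex_le_of_mem_expOrbit hl (mapDomain_mem_expOrbit ha (Subgroup.mem_top _)))
    (lex_le_of_mem_expOrbit hm (mapDomain_mem_expOrbit hb (Subgroup.mem_top _)))

end Rearrangement

section Staircase

/-- The exponent vector `δ = (n-1, n-2, …, 0)` of `m = ∏ x_i^(n-i)`. -/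
noncomputable def staircase (n : ℕ) : Fin n →₀ ℕ :=
  Finsupp.equivFunOnFinite.symm fun i : Fin n => n - 1 - (i : ℕ)

lemma staircase_apply (i : Fin n) : staircase n i = n - 1 - (i : ℕ) := rfl

lemma strictAnti_staircase : StrictAnti (staircase n) := fun i j hij => by
  simp only [staircase_apply]
  have := j.is_lt
  omega

lemma antitone_add_val_of_strictAnti {s : Fin n → ℕ} (hs : StrictAnti s) :
    Antitone fun i : Fin n => s i + i := by
  cases n with
  | zero => exact fun i => i.elim0
  | succ n =>
    refine Fin.antitone_iff_succ_le.2 fun i => ?_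
    have := hs (Fin.castSucc_lt_succ (i := i))
    simp only [Fin.val_succ, Fin.val_castSucc]
    omega

lemma exists_antitone_add_staircase {s : Fin n →₀ ℕ} (hs : StrictAnti s) :
    ∃ l : Fin n →₀ ℕ, Antitone l ∧ l + staircase n = s := by
  have ht := antitone_add_val_of_strictAnti hs
  refine ⟨s - staircase n, fun i j hij => ?_, ?_⟩
  · have : s j + j ≤ s i + i := ht hij
    have := j.is_lt
    have := Fin.le_def.1 hij
    simp only [Finsupp.tsub_apply, staircase_apply]
    omega
  · ext i
    have := i.is_lt
    have hlast : n - 1 ≤ s i + i := by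
      have : s ⟨n - 1, by omega⟩ + (n - 1) ≤ s i + i :=
        ht (show i ≤ ⟨n - 1, by omega⟩ from Fin.mk_le_mk.2 (by omega))
      omega
    simp only [Finsupp.add_apply, Finsupp.tsub_apply, staircase_apply]
    omega

end Staircase

section Products

variable {R : Type*} [CommSemiring R]

lemma mapDomain_perm_mapDomain_inv (g : Equiv.Perm (Fin n)) (e : Fin n →₀ ℕ) :
    Finsupp.mapDomain g (Finsupp.mapDomain ⇑g⁻¹ e) = e := by
  simpa using mapDomain_perm_inv_mapDomain g⁻¹ e

/-- In `Z_{S_n}(l) * Z_G(m)`, the exponent `l + m` and its permutations arise from a single pair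
of exponents, since `l` and `m` are the lexicographically largest points of their orbits. -/
lemma coeff_mapDomain_orbitSum_mul_orbitSum {l m : Fin n →₀ ℕ} (hl : Antitone l) (hm : Antitone m)
    (G : Subgroup (Equiv.Perm (Fin n))) (g : Equiv.Perm (Fin n)) :
    coeff (Finsupp.mapDomain g (l + m)) (orbitSum ⊤ R l * orbitSum G R m) =
      if Finsupp.mapDomain g m ∈ expOrbit G m then 1 else 0 := by
  classical
  rw [coeff_mul, Finset.sum_eq_single (Finsupp.mapDomain g l, Finsupp.mapDomain g m)]
  · rw [coeff_orbitSum, coeff_orbitSum,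
      if_pos (mapDomain_mem_expOrbit (self_mem_expOrbit l) (Subgroup.mem_top g)), one_mul]
  · rintro ⟨a, b⟩ hab hne
    rw [Finset.HasAntidiagonal.mem_antidiagonal] at hab
    rw [coeff_orbitSum, coeff_orbitSum]
    split_ifs with ha hb
    · have hg := Subgroup.mem_top (G := Equiv.Perm (Fin n)) g⁻¹
      obtain ⟨hal, hbm⟩ := eq_and_eq_of_add_eq hl hm (mapDomain_mem_expOrbit ha hg)
        (mapDomain_mem_expOrbit (expOrbit_subset_top m hb) hg)
        (by rw [← Finsupp.mapDomain_add, hab, mapDomain_perm_inv_mapDomain])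
      refine absurd ?_ hne
      rw [← hal, ← hbm, mapDomain_perm_mapDomain_inv, mapDomain_perm_mapDomain_inv]
    all_goals simp
  · exact fun h => absurd (Finset.HasAntidiagonal.mem_antidiagonal.2 Finsupp.mapDomain_add.symm) h

end Products

section Uniqueness

variable {R : Type*} [CommRing R] {τ : Equiv.Perm (Fin n)} {e : Fin n →₀ ℕ}

lemma lex_leadingCoeff_orbitSum_sub_rename (hτ : Equiv.Perm.sign τ = -1) (he : StrictAnti e) :
    MonomialOrder.lex.leadingCoeff (orbitSum (alternatingGroup (Fin n)) R e -
      rename τ (orbitSum (alternatingGroup (Fin n)) R e)) = 1 := by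
  classical
  nontriviality R
  set Z := orbitSum (alternatingGroup (Fin n)) R e
  have hcoeff : coeff e (Z - rename τ Z) = 1 := by
    rw [coeff_sub, coeff_rename_perm, coeff_orbitSum, coeff_orbitSum, if_pos (self_mem_expOrbit e),
      if_neg, sub_zero]
    rw [mapDomain_mem_expOrbit_alternatingGroup_iff he.injective, Equiv.Perm.mem_alternatingGroup,
      map_inv, hτ]
    decide
  have hsupp : ∀ v ∈ (Z - rename τ Z).support, v ∈ expOrbit ⊤ e := by
    intro v hv
    rcases Finset.mem_union.1 (support_sub _ _ _ hv) with hv | hv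
    · exact expOrbit_subset_top e (support_orbitSum_subset e hv)
    · rw [support_rename_of_injective τ.injective] at hv
      obtain ⟨w, hw, rfl⟩ := Finset.mem_image.1 hv
      exact mapDomain_mem_expOrbit (expOrbit_subset_top e (support_orbitSum_subset e hw))
        (Subgroup.mem_top τ)
  have hdeg : MonomialOrder.lex.degree (Z - rename τ Z) = e := by
    refine MonomialOrder.lex.toSyn.injective (le_antisymm ?_ ?_)
    · exact MonomialOrder.lex.degree_le_iff.2 fun v hv =>
        lex_le_of_mem_expOrbit he.antitone (hsupp v hv)
    · exact MonomialOrder.lex.le_degree (mem_support_iff.2 (by rw [hcoeff]; exact one_ne_zero))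
  rw [MonomialOrder.leadingCoeff, hdeg, hcoeff]

lemma eq_zero_of_isSymmetric_add_mul_orbitSum_eq_zero (hτ : Equiv.Perm.sign τ = -1)
    (he : StrictAnti e) {a b : MvPolynomial (Fin n) R} (ha : a.IsSymmetric) (hb : b.IsSymmetric)
    (h : a + b * orbitSum (alternatingGroup (Fin n)) R e = 0) : a = 0 ∧ b = 0 := by
  set Z := orbitSum (alternatingGroup (Fin n)) R e
  have hτh : a + b * rename τ Z = 0 := by
    simpa only [map_add, map_mul, ha τ, hb τ, map_zero] using congrArg (rename τ) h
  have hbW : b * (Z - rename τ Z) = 0 := by linear_combination h - hτh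
  have hW := lex_leadingCoeff_orbitSum_sub_rename (R := R) hτ he
  have hlc := MonomialOrder.lex.leadingCoeff_mul_of_isRegular_right (f := b)
    (hW ▸ isRegular_one : IsRegular (MonomialOrder.lex.leadingCoeff (Z - rename τ Z)))
  rw [hbW, hW, mul_one, MonomialOrder.leadingCoeff_zero, eq_comm,
    MonomialOrder.leadingCoeff_eq_zero_iff] at hlc
  subst hlc
  simpa using h

end Uniqueness

section Existence

variable {R : Type*} [CommRing R]

lemma PermInvariant.sub {G : Subgroup (Equiv.Perm (Fin n))} {f g : MvPolynomial (Fin n) R}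
    (hf : PermInvariant G f) (hg : PermInvariant G g) : PermInvariant G (f - g) := fun σ hσ => by
  rw [map_sub, hf σ hσ, hg σ hσ]

noncomputable def symmetricSpan (n : ℕ) (R : Type*) [CommRing R] :
    Submodule (symmetricSubalgebra (Fin n) R) (MvPolynomial (Fin n) R) :=
  Submodule.span _ {1, orbitSum (alternatingGroup (Fin n)) R (staircase n)}

lemma mem_symmetricSpan_iff {f : MvPolynomial (Fin n) R} :
    f ∈ symmetricSpan n R ↔ ∃ a b : MvPolynomial (Fin n) R, a.IsSymmetric ∧ b.IsSymmetric ∧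
      a + b * orbitSum (alternatingGroup (Fin n)) R (staircase n) = f := by
  rw [symmetricSpan, Submodule.mem_span_pair]
  constructor
  · rintro ⟨a, b, rfl⟩
    exact ⟨a, b, a.2, b.2, by simp [Subalgebra.smul_def]⟩
  · rintro ⟨a, b, ha, hb, rfl⟩
    exact ⟨⟨a, ha⟩, ⟨b, hb⟩, by simp [Subalgebra.smul_def]⟩

lemma permInvariant_of_mem_symmetricSpan {f : MvPolynomial (Fin n) R} (hf : f ∈ symmetricSpan n R) :
    PermInvariant (alternatingGroup (Fin n)) f := by
  obtain ⟨a, b, ha, hb, rfl⟩ := mem_symmetricSpan_iff.1 hf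
  intro g hg
  rw [map_add, map_mul, ha g, hb g, permInvariant_orbitSum _ g hg]

lemma exists_mem_symmetricSpan_coeff_eq_of_not_injective {f : MvPolynomial (Fin n) R}
    (hf : PermInvariant (alternatingGroup (Fin n)) f) {s : Fin n →₀ ℕ} (hs : Antitone s)
    (hinj : ¬ Function.Injective s) :
    ∃ g ∈ symmetricSpan n R, (∀ v ∈ g.support, toLex (sortDesc v) ≤ toLex s) ∧
      ∀ v ∈ expOrbit ⊤ s, coeff v g = coeff v f := by
  refine ⟨C (coeff s f) * orbitSum ⊤ R s, mem_symmetricSpan_iff.2 ⟨_, 0,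
    (IsSymmetric.C _).mul (isSymmetric_orbitSum_top s), IsSymmetric.zero, by ring⟩,
    fun v hv => ?_, fun v hv => ?_⟩
  · rw [C_mul'] at hv
    rw [(sortDesc_eq_iff hs).2 (support_orbitSum_subset s (support_smul hv))]
  · rw [coeff_C_mul, coeff_orbitSum, if_pos hv, mul_one]
    rw [← expOrbit_alternatingGroup_eq_top hinj] at hv
    obtain ⟨g, hg, rfl⟩ := mem_expOrbit.1 hv
    exact (hf.coeff_mapDomain hg s).symm

lemma exists_mem_symmetricSpan_coeff_eq_of_strictAnti {τ : Equiv.Perm (Fin n)}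
    (hτ : Equiv.Perm.sign τ = -1) {f : MvPolynomial (Fin n) R}
    (hf : PermInvariant (alternatingGroup (Fin n)) f) {s : Fin n →₀ ℕ} (hs : StrictAnti s) :
    ∃ g ∈ symmetricSpan n R, (∀ v ∈ g.support, toLex (sortDesc v) ≤ toLex s) ∧
      ∀ v ∈ expOrbit ⊤ s, coeff v g = coeff v f := by
  classical
  obtain ⟨l, hl, rfl⟩ := exists_antitone_add_staircase hs
  set a := coeff (l + staircase n) f
  set b := coeff (Finsupp.mapDomain τ (l + staircase n)) f
  refine ⟨C b * orbitSum ⊤ R (l + staircase n) +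
      C (a - b) * (orbitSum ⊤ R l * orbitSum (alternatingGroup (Fin n)) R (staircase n)),
    mem_symmetricSpan_iff.2 ⟨C b * orbitSum ⊤ R (l + staircase n), C (a - b) * orbitSum ⊤ R l,
      (IsSymmetric.C _).mul (isSymmetric_orbitSum_top _),
      (IsSymmetric.C _).mul (isSymmetric_orbitSum_top _), by ring⟩, fun v hv => ?_, fun v hv => ?_⟩
  · rw [C_mul', C_mul'] at hv
    rcases Finset.mem_union.1 (support_add hv) with hv | hv
    · rw [(sortDesc_eq_iff hs.antitone).2 (support_orbitSum_subset _ (support_smul hv))]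
    · obtain ⟨c, hc, d, hd, rfl⟩ := Finset.mem_add.1 (support_mul _ _ (support_smul hv))
      exact lex_sortDesc_add_le hl strictAnti_staircase.antitone (support_orbitSum_subset l hc)
        (expOrbit_subset_top _ (support_orbitSum_subset _ hd))
  · obtain ⟨g, -, rfl⟩ := mem_expOrbit.1 hv
    rw [coeff_add, coeff_C_mul, coeff_C_mul, coeff_orbitSum, if_pos hv,
      coeff_mapDomain_orbitSum_mul_orbitSum hl strictAnti_staircase.antitone]
    simp only [mapDomain_mem_expOrbit_alternatingGroup_iff strictAnti_staircase.injective]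
    split_ifs with hg
    · rw [hf.coeff_mapDomain hg]
      ring
    · have hgτ : g * τ⁻¹ ∈ alternatingGroup (Fin n) := by
        rw [Equiv.Perm.mem_alternatingGroup] at hg ⊢
        rw [map_mul, map_inv, hτ, (Int.units_eq_one_or _).resolve_left hg]
        rfl
      rw [← inv_mul_cancel_right g τ, mapDomain_perm_mul, hf.coeff_mapDomain hgτ]
      ring

lemma exists_mem_symmetricSpan_coeff_eq {τ : Equiv.Perm (Fin n)} (hτ : Equiv.Perm.sign τ = -1)
    {f : MvPolynomial (Fin n) R} (hf : PermInvariant (alternatingGroup (Fin n)) f)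
    {s : Fin n →₀ ℕ} (hs : Antitone s) :
    ∃ g ∈ symmetricSpan n R, (∀ v ∈ g.support, toLex (sortDesc v) ≤ toLex s) ∧
      ∀ v ∈ expOrbit ⊤ s, coeff v g = coeff v f := by
  by_cases hinj : Function.Injective s
  · exact exists_mem_symmetricSpan_coeff_eq_of_strictAnti hτ hf (hs.strictAnti_of_injective hinj)
  · exact exists_mem_symmetricSpan_coeff_eq_of_not_injective hf hs hinj

noncomputable def sortedDegree (f : MvPolynomial (Fin n) R) : WithBot (Lex (Fin n →₀ ℕ)) :=
  f.support.sup fun v => WithBot.some (toLex (sortDesc v))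

lemma sortedDegree_sub_lt {f g : MvPolynomial (Fin n) R} {v₀ : Fin n →₀ ℕ} (hv₀ : v₀ ∈ f.support)
    (hmax : ∀ v ∈ f.support, toLex (sortDesc v) ≤ toLex (sortDesc v₀))
    (hg : ∀ v ∈ g.support, toLex (sortDesc v) ≤ toLex (sortDesc v₀))
    (hcoeff : ∀ v ∈ expOrbit ⊤ (sortDesc v₀), coeff v g = coeff v f) :
    sortedDegree (f - g) < sortedDegree f := by
  classical
  have hf : sortedDegree f = WithBot.some (toLex (sortDesc v₀)) :=
    le_antisymm (Finset.sup_le fun v hv => WithBot.coe_le_coe.2 (hmax v hv))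
      (Finset.le_sup (f := fun v => WithBot.some (toLex (sortDesc v))) hv₀)
  rw [hf, sortedDegree, Finset.sup_lt_iff (WithBot.bot_lt_coe _)]
  intro v hv
  have hle : toLex (sortDesc v) ≤ toLex (sortDesc v₀) := by
    rcases Finset.mem_union.1 (support_sub _ f g hv) with h | h
    exacts [hmax v h, hg v h]
  refine WithBot.coe_lt_coe.2 (hle.lt_of_ne fun heq => mem_support_iff.1 hv ?_)
  rw [coeff_sub, hcoeff v ((sortDesc_eq_iff (antitone_sortDesc v₀)).1 (toLex.injective heq)),
    sub_self]

theorem mem_symmetricSpan_of_permInvariant (hn : 2 ≤ n) {f : MvPolynomial (Fin n) R}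
    (hf : PermInvariant (alternatingGroup (Fin n)) f) : f ∈ symmetricSpan n R := by
  obtain ⟨τ, hτ⟩ := exists_sign_eq_neg_one hn
  induction hd : sortedDegree f using WellFoundedLT.induction generalizing f with
  | ind d ih =>
  subst hd
  by_cases h0 : f = 0
  · exact h0 ▸ Submodule.zero_mem _
  obtain ⟨v₀, hv₀, hmax⟩ := f.support.exists_max_image (fun v => toLex (sortDesc v))
    (support_nonempty.2 h0)
  obtain ⟨g, hg, hgsupp, hgcoeff⟩ :=
    exists_mem_symmetricSpan_coeff_eq hτ hf (antitone_sortDesc v₀)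
  exact (Submodule.sub_mem_iff_left _ hg).1 (ih _ (sortedDegree_sub_lt hv₀ hmax hgsupp hgcoeff)
    (hf.sub (permInvariant_of_mem_symmetricSpan hg)) rfl)

end Existence

theorem stmt17_general (n : ℕ) (hn : 2 ≤ n) (p : ℕ)
    (f : MvPolynomial (Fin n) (ZMod p)) (hf : PermInvariant (alternatingGroup (Fin n)) f) :
    ∃! c : MvPolynomial (Fin n) (ZMod p) × MvPolynomial (Fin n) (ZMod p),
      (c.1.IsSymmetric ∧ c.2.IsSymmetric) ∧
      f = c.1 + c.2 * map (Int.castRingHom (ZMod p))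
          (orbitSum (alternatingGroup (Fin n)) ℤ
            (Finsupp.equivFunOnFinite.symm fun i : Fin n => n - 1 - (i : ℕ))) := by
  rw [map_orbitSum]
  change ∃! c : _ × _, _ ∧ f = c.1 + c.2 * orbitSum _ _ (staircase n)
  obtain ⟨τ, hτ⟩ := exists_sign_eq_neg_one hn
  obtain ⟨a, b, ha, hb, rfl⟩ := mem_symmetricSpan_iff.1 (mem_symmetricSpan_of_permInvariant hn hf)
  refine ⟨(a, b), ⟨⟨ha, hb⟩, rfl⟩, fun c ⟨⟨hc₁, hc₂⟩, hc⟩ => ?_⟩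
  obtain ⟨h₁, h₂⟩ := eq_zero_of_isSymmetric_add_mul_orbitSum_eq_zero hτ strictAnti_staircase
    (hc₁.sub ha) (hc₂.sub hb) (by linear_combination -hc)
  exact Prod.ext (sub_eq_zero.1 h₁) (sub_eq_zero.1 h₂)

/-- For `n ≥ 2`, with `m = ∏_{i=1}^{n−1} x_i^{n−i}` and `Z(m)` its
`A_n`-orbit sum, for every prime `p` one has
`𝔽_p[x]^{A_n} = 𝔽_p[x]^{S_n} ⊕ 𝔽_p[x]^{S_n}·Z(m)‾`: every `A_n`-invariant polynomial over
`𝔽_p` is uniquely `c_1 + c_2·Z(m)‾` with `c_1, c_2` symmetric.  In particular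
`𝔽_p[x]^{A_n}` is a free `𝔽_p[x]^{S_n}`-module of rank 2 for every prime `p`. -/
theorem stmt17 (n : ℕ) (hn : 2 ≤ n) (p : ℕ) (hp : p.Prime)
    (f : MvPolynomial (Fin n) (ZMod p)) (hf : PermInvariant (alternatingGroup (Fin n)) f) :
    ∃! c : MvPolynomial (Fin n) (ZMod p) × MvPolynomial (Fin n) (ZMod p),
      (c.1.IsSymmetric ∧ c.2.IsSymmetric) ∧
      f = c.1 + c.2 * map (Int.castRingHom (ZMod p))
          (orbitSum (alternatingGroup (Fin n)) ℤ
            (Finsupp.equivFunOnFinite.symm fun i : Fin n => n - 1 - (i : ℕ))) :=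
  stmt17_general n hn p f hf
end

section
/- Let 𝒪 be a principal ideal domain, let A be an ℓ×k matrix over 𝒪 with k < ℓ and rank k, and let v_1,…,v_r ∈ 𝒪^ℓ. For an ℓ×(k+1) matrix B, let μ(B) denote the gcd of all (k+1)×(k+1) minors of B (the product of its elementary divisors). Then: (i) for every v in the 𝒪-span of v_1,…,v_r, the gcd N := gcd(μ([A|v_1]), …, μ([A|v_r])) divides μ([A|v]); and (ii) there exist q_1,…,q_r ∈ 𝒪 such that, with v = q_1 v_1 + ⋯ + q_r v_r, one has μ([A|v]) = N (up to associates). -/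
/-!
The maximal minors of `[A|v]` are `𝒪`-linear in `v`, so for `w` in the span of the `v_s` they
are combinations of the minors of the `[A|v_s]`; this gives (i). For (ii), the image of
`q ↦ (minors of [A|Σ q_s v_s])` is a submodule of a free module over a PID. Its Smith normal form
yields an element `w` of it (the sum of the basis vectors of the submodule) whose content divides
every coordinate of every element, in particular the content of the minors of each `[A|v_s]`.
-/

/-- `μ(B)`: the gcd of all maximal (`m×m`) minors of an `l×m` matrix `B` (equivalently, the
product of its elementary divisors). -/
noncomputable def gcdMaxMinors {O : Type*} [CommRing O] [IsDomain O] [NormalizedGCDMonoid O]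
    {l m : ℕ} (B : Matrix (Fin l) (Fin m) O) : O :=
  (Finset.univ.powersetCard m).gcd fun s =>
    if h : s.card = m then
      (B.submatrix (fun i : Fin m => ((s.orderIsoOfFin h) i).1) id).det
    else 0

/-- The matrix `[A|v]`: `A` augmented by the column `v`. -/
def augmentCol {O : Type*} {l k : ℕ} (A : Matrix (Fin l) (Fin k) O) (v : Fin l → O) :
    Matrix (Fin l) (Fin (k + 1)) O :=
  Matrix.of fun i => Fin.snoc (A i) (v i)

open Finset

theorem Finset.univ_gcd_eq_gcd_of_eq_zero {α β : Type*} [Fintype β] [CommMonoidWithZero α]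
    [NormalizedGCDMonoid α] {s : Finset β} {f : β → α} (hf : ∀ b ∉ s, f b = 0) :
    univ.gcd f = s.gcd f := by
  classical
  rw [gcd_eq_gcd_filter_ne_zero, gcd_eq_gcd_filter_ne_zero (s := s)]
  congr 1
  ext b
  simpa using fun hb => not_imp_comm.1 (hf b) hb

section Content

theorem mem_pi_span_singleton_iff {O ι : Type*} [CommRing O] {c : O} {x : ι → O} :
    x ∈ Submodule.pi Set.univ (fun _ => Ideal.span {c}) ↔ ∀ j, c ∣ x j := by
  simp [Submodule.mem_pi, Ideal.mem_span_singleton]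

variable {O ι : Type*} [CommRing O] [NormalizedGCDMonoid O] [Fintype ι]

theorem gcd_dvd_linearMap_apply (φ : (ι → O) →ₗ[O] O) (x : ι → O) :
    univ.gcd x ∣ φ x := by
  classical
  conv_rhs => rw [pi_eq_sum_univ x, map_sum]
  exact dvd_sum fun j _ => by
    rw [map_smul, smul_eq_mul]; exact (Finset.gcd_dvd (f := x) (mem_univ j)).mul_right _

theorem Submodule.exists_mem_forall_gcd_dvd [IsDomain O] [IsPrincipalIdealRing O]
    (N : Submodule O (ι → O)) :
    ∃ w ∈ N, ∀ x ∈ N, ∀ j, univ.gcd w ∣ x j := by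
  classical
  obtain ⟨n, bM, bN, f, a, snf⟩ := N.smithNormalForm (Pi.basisFun O ι)
  refine ⟨∑ i, (bN i : ι → O), N.sum_mem fun i _ => (bN i).2, fun x hx => ?_⟩
  set c := univ.gcd (∑ i, (bN i : ι → O))
  -- `a i` is the `bM`-coordinate of the sum at `f i`, a linear function of its entries.
  have hc : ∀ i, c ∣ a i := fun i => by
    have := gcd_dvd_linearMap_apply (bM.coord (f i)) (∑ i, (bN i : ι → O))
    simpa [c, snf, Finsupp.single_apply, f.injective.eq_iff] using this
  intro j
  have hx_sum : x = ∑ i, bN.repr ⟨x, hx⟩ i • (bN i : ι → O) := by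
    have := congrArg Subtype.val (bN.sum_repr ⟨x, hx⟩)
    push_cast at this
    exact this.symm
  rw [hx_sum]
  simp only [snf, Finset.sum_apply, Pi.smul_apply, smul_eq_mul]
  exact dvd_sum fun i _ => ((hc i).mul_right _).mul_left _

variable {M κ : Type*} [AddCommGroup M] [Module O M] [Fintype κ]

theorem gcd_gcd_dvd_gcd_of_mem_span (F : M →ₗ[O] ι → O) (v : κ → M) {w : M}
    (hw : w ∈ Submodule.span O (Set.range v)) :
    (univ.gcd fun s => univ.gcd (F (v s))) ∣ univ.gcd (F w) := by
  set c := univ.gcd fun s => univ.gcd (F (v s))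
  have hspan : Submodule.span O (Set.range v) ≤
      (Submodule.pi Set.univ (fun _ => Ideal.span {c})).comap F := by
    rw [Submodule.span_le]
    rintro _ ⟨s, rfl⟩
    exact mem_pi_span_singleton_iff.2 fun j =>
      (Finset.gcd_dvd (mem_univ s)).trans (Finset.gcd_dvd (mem_univ j))
  exact dvd_gcd fun j _ => mem_pi_span_singleton_iff.1 (hspan hw) j

theorem exists_associated_gcd_sum_smul [IsDomain O] [IsPrincipalIdealRing O]
    (F : M →ₗ[O] ι → O) (v : κ → M) :
    ∃ q : κ → O, Associated (univ.gcd (F (∑ s, q s • v s)))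
      (univ.gcd fun s => univ.gcd (F (v s))) := by
  classical
  obtain ⟨_, ⟨q, rfl⟩, hdvd⟩ :=
    (LinearMap.range (F ∘ₗ Fintype.linearCombination O v)).exists_mem_forall_gcd_dvd
  refine ⟨q, associated_of_dvd_dvd ?_ ?_⟩
  · exact dvd_gcd fun s _ => dvd_gcd fun j _ =>
      hdvd _ ⟨Pi.single s 1, by simp⟩ j
  · exact gcd_gcd_dvd_gcd_of_mem_span F v <| by
      rw [← Fintype.range_linearCombination]; exact LinearMap.mem_range_self _ q

end Content

section AugmentedMinors

variable {O : Type*} [CommRing O] {l k : ℕ}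

theorem submatrix_augmentCol_eq_updateCol (A : Matrix (Fin l) (Fin k) O)
    (f : Fin (k + 1) → Fin l) (v : Fin l → O) :
    (augmentCol A v).submatrix f id =
      ((augmentCol A 0).submatrix f id).updateCol (Fin.last k) (v ∘ f) := by
  ext i j
  induction j using Fin.lastCases with
  | last => simp [augmentCol]
  | cast j => simp [augmentCol, (Fin.castSucc_lt_last j).ne]

noncomputable def augmentColMinor (A : Matrix (Fin l) (Fin k) O) (f : Fin (k + 1) → Fin l) :
    (Fin l → O) →ₗ[O] O where
  toFun v := ((augmentCol A v).submatrix f id).det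
  map_add' v w := by
    rw [submatrix_augmentCol_eq_updateCol A f (v + w), submatrix_augmentCol_eq_updateCol A f v,
      submatrix_augmentCol_eq_updateCol A f w]
    exact Matrix.det_updateCol_add _ _ _ _
  map_smul' c v := by
    rw [submatrix_augmentCol_eq_updateCol A f (c • v), submatrix_augmentCol_eq_updateCol A f v]
    exact Matrix.det_updateCol_smul _ _ _ _

noncomputable def augmentColMaxMinors (A : Matrix (Fin l) (Fin k) O) :
    (Fin l → O) →ₗ[O] Finset (Fin l) → O :=
  LinearMap.pi fun t =>
    if h : t.card = k + 1 then augmentColMinor A fun i => (t.orderIsoOfFin h i).1 else 0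

theorem augmentColMaxMinors_apply (A : Matrix (Fin l) (Fin k) O) (v : Fin l → O)
    (t : Finset (Fin l)) :
    augmentColMaxMinors A v t = if h : t.card = k + 1 then
      ((augmentCol A v).submatrix (fun i => (t.orderIsoOfFin h i).1) id).det else 0 := by
  simp only [augmentColMaxMinors, LinearMap.pi_apply]
  split <;> rfl

theorem gcdMaxMinors_augmentCol [IsDomain O] [NormalizedGCDMonoid O]
    (A : Matrix (Fin l) (Fin k) O) (v : Fin l → O) :
    gcdMaxMinors (augmentCol A v) = univ.gcd (augmentColMaxMinors A v) := by
  rw [univ_gcd_eq_gcd_of_eq_zero (s := univ.powersetCard (k + 1))]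
  · exact gcd_congr rfl fun t _ => (augmentColMaxMinors_apply A v t).symm
  · intro t ht
    rw [augmentColMaxMinors_apply, dif_neg]
    simpa using ht

end AugmentedMinors

theorem stmt19_general {O : Type*} [CommRing O] [IsDomain O] [IsPrincipalIdealRing O]
    [NormalizedGCDMonoid O]
    (l k r : ℕ) (A : Matrix (Fin l) (Fin k) O)
    (v : Fin r → (Fin l → O)) :
    (∀ w ∈ Submodule.span O (Set.range v),
      (Finset.univ.gcd fun s : Fin r => gcdMaxMinors (augmentCol A (v s))) ∣
        gcdMaxMinors (augmentCol A w)) ∧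
    ∃ q : Fin r → O,
      Associated (gcdMaxMinors (augmentCol A (∑ s, q s • v s)))
        (Finset.univ.gcd fun s : Fin r => gcdMaxMinors (augmentCol A (v s))) := by
  simp only [gcdMaxMinors_augmentCol]
  exact ⟨fun w => gcd_gcd_dvd_gcd_of_mem_span _ v, exists_associated_gcd_sum_smul _ v⟩

/-- Let `𝒪` be a PID, `A` an `ℓ×k` matrix over `𝒪` with `k < ℓ` of rank
`k`, and `v_1,…,v_r ∈ 𝒪^ℓ`.  With `N = gcd(μ([A|v_1]),…,μ([A|v_r]))`:
(i) for every `w` in the span of the `v_s`, `N ∣ μ([A|w])`; and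
(ii) there are `q_1,…,q_r ∈ 𝒪` such that `μ([A|Σ q_s v_s])` is associated to `N`. -/
theorem stmt19 {O : Type*} [CommRing O] [IsDomain O] [IsPrincipalIdealRing O]
    [NormalizedGCDMonoid O]
    (l k r : ℕ) (hk : k < l) (A : Matrix (Fin l) (Fin k) O) (hrank : A.rank = k)
    (v : Fin r → (Fin l → O)) :
    (∀ w ∈ Submodule.span O (Set.range v),
      (Finset.univ.gcd fun s : Fin r => gcdMaxMinors (augmentCol A (v s))) ∣
        gcdMaxMinors (augmentCol A w)) ∧
    ∃ q : Fin r → O,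
      Associated (gcdMaxMinors (augmentCol A (∑ s, q s • v s)))
        (Finset.univ.gcd fun s : Fin r => gcdMaxMinors (augmentCol A (v s))) :=
  stmt19_general l k r A v
end
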